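/- arXiv:2110.07113 — 6 statements merged into one kernel-verified Lean document; each statement's English description precedes it below -/
import Mathlib

section
/- A point x ∈ [-1,1]^n lies in the convex hull of the even vertices of the n-cube [-1,1]^n (the n-demicube) if and only if s₁(x) := max_{λ∈{-1,1}^n, ∏λᵢ=-1} Σ λᵢ xᵢ ≤ n - 2. -/
/-- s₁(x): the maximum of Σ λᵢ xᵢ over sign vectors λ ∈ {-1,1}ⁿ with ∏λᵢ = -1. -/
noncomputable def s1 (n : ℕ) (x : Fin n → ℝ) : ℝ :=
  sSup {s : ℝ | ∃ l : Fin n → ℝ, (∀ i, l i = 1 ∨ l i = -1) ∧ (∏ i, l i) = -1 ∧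
    s = ∑ i, l i * x i}

/-- The even vertices of the n-cube [-1,1]ⁿ: ±1 vectors with coordinate product +1. -/
def evenVertices (n : ℕ) : Set (Fin n → ℝ) :=
  {v | (∀ i, v i = 1 ∨ v i = -1) ∧ (∏ i, v i) = 1}

open Finset

/-- If each term is ±1 and the product is -1, the sum is at most n - 2. -/
lemma oddSignSum_le {n : ℕ} {w : Fin n → ℝ}
    (hpm : ∀ i, w i = 1 ∨ w i = -1) (hprod : (∏ i, w i) = -1) :
    ∑ i, w i ≤ (n : ℝ) - 2 := by
  have hj : ∃ j, w j = -1 := by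
    by_contra h
    push_neg at h
    have h1 : ∀ i, w i = 1 := fun i => (hpm i).resolve_right (h i)
    rw [Finset.prod_congr rfl (fun i _ => h1 i)] at hprod
    norm_num at hprod
  obtain ⟨j, hj⟩ := hj
  have hsum : ∑ i ∈ univ.erase j, w i + w j = ∑ i, w i :=
    Finset.sum_erase_add _ _ (mem_univ j)
  have hbound : ∑ i ∈ univ.erase j, w i ≤ (n : ℝ) - 1 := by
    calc ∑ i ∈ univ.erase j, w i ≤ ∑ _i ∈ univ.erase j, (1:ℝ) := by
          apply Finset.sum_le_sum
          intro i _
          rcases hpm i with h|h <;> rw [h] <;> norm_num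
        _ = ((univ.erase j).card : ℝ) := by simp
        _ = (n:ℝ) - 1 := by
          rw [Finset.card_erase_of_mem (mem_univ j), Finset.card_univ, Fintype.card_fin]
          have : 1 ≤ n := j.pos
          push_cast [Nat.cast_sub this]
          ring
  linarith

/-- x ∈ [-1,1]ⁿ lies in the n-demicube (convex hull of even vertices)
iff s₁(x) ≤ n - 2. -/
theorem stmt6 (n : ℕ) (hn : 1 ≤ n) (x : Fin n → ℝ) (hx : ∀ i, |x i| ≤ 1) :
    x ∈ convexHull ℝ (evenVertices n) ↔ s1 n x ≤ (n : ℝ) - 2 := by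
  constructor
  · -- forward: each odd sign functional is ≤ n-2 on the hull
    intro hmem
    have hne : {s : ℝ | ∃ l : Fin n → ℝ, (∀ i, l i = 1 ∨ l i = -1) ∧ (∏ i, l i) = -1 ∧
        s = ∑ i, l i * x i}.Nonempty := by
      refine ⟨∑ i, (if i = (⟨0, hn⟩ : Fin n) then (-1:ℝ) else 1) * x i,
        fun i => if i = (⟨0, hn⟩ : Fin n) then (-1:ℝ) else 1, ?_, ?_, rfl⟩
      · intro i; by_cases h : i = (⟨0, hn⟩ : Fin n) <;> simp [h]
      · simp
    apply csSup_le hne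
    rintro s ⟨l, hl, hlprod, rfl⟩
    -- the halfspace {y | ∑ l i * y i ≤ n - 2} is convex and contains the even vertices
    have hlin : IsLinearMap ℝ (fun y : Fin n → ℝ => ∑ i, l i * y i) := by
      constructor
      · intro y z; simp [mul_add, Finset.sum_add_distrib]
      · intro c y; simp [Finset.mul_sum, mul_comm, mul_left_comm]
    have hsub : evenVertices n ⊆ {y : Fin n → ℝ | (fun y => ∑ i, l i * y i) y ≤ (n:ℝ) - 2} := by
      rintro v ⟨hv, hvprod⟩
      have hpm : ∀ i, l i * v i = 1 ∨ l i * v i = -1 := by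
        intro i
        rcases hl i with h|h <;> rcases hv i with h'|h' <;> simp [h, h']
      have hprod : (∏ i, l i * v i) = -1 := by
        rw [Finset.prod_mul_distrib, hlprod, hvprod]; ring
      exact oddSignSum_le hpm hprod
    have := convexHull_min hsub (convex_halfSpace_le hlin ((n:ℝ) - 2)) hmem
    exact this
  · -- backward: separation argument
    intro hs
    -- pointwise consequence of hs
    have hodd : ∀ l : Fin n → ℝ, (∀ i, l i = 1 ∨ l i = -1) → (∏ i, l i) = -1 →
        ∑ i, l i * x i ≤ (n : ℝ) - 2 := by
      intro l hl hlprod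
      have hbdd : BddAbove {s : ℝ | ∃ l : Fin n → ℝ, (∀ i, l i = 1 ∨ l i = -1) ∧
          (∏ i, l i) = -1 ∧ s = ∑ i, l i * x i} := by
        refine ⟨(n : ℝ), ?_⟩
        rintro s ⟨m, hm, -, rfl⟩
        have h1 : ∑ i, m i * x i ≤ ∑ _i : Fin n, (1:ℝ) := by
          apply Finset.sum_le_sum
          intro i _
          have h2 : |m i * x i| ≤ 1 := by
            rw [abs_mul]
            rcases hm i with h|h <;> simp [h, hx i]
          exact le_trans (le_abs_self _) h2
        simpa using h1
      exact le_trans (le_csSup hbdd ⟨l, hl, hlprod, rfl⟩) hs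
    by_contra hmem
    have hfin : (evenVertices n).Finite := by
      apply Set.Finite.subset
        (Set.finite_range (fun (b : Fin n → Bool) (i : Fin n) => if b i then (1:ℝ) else -1))
      rintro v ⟨hv, -⟩
      refine ⟨fun i => decide (v i = 1), ?_⟩
      funext i
      rcases hv i with h|h <;> norm_num [h]
    obtain ⟨f, u, hfu, hux⟩ := geometric_hahn_banach_closed_point
      (convex_convexHull ℝ _) (hfin.isClosed_convexHull (𝕜 := ℝ)) hmem
    set c : Fin n → ℝ := fun i => f (Pi.single i 1) with hc
    have hfy : ∀ y : Fin n → ℝ, f y = ∑ i, c i * y i := by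
      intro y
      conv_lhs => rw [← Finset.univ_sum_single y]
      rw [map_sum]
      apply Finset.sum_congr rfl
      intro i _
      have : Pi.single i (y i) = y i • (Pi.single i 1 : Fin n → ℝ) := by
        funext j
        by_cases h : j = i <;> simp [Pi.single_apply, h]
      rw [this, map_smul, smul_eq_mul, hc]
      ring
    -- the sign vector of c
    set μ : Fin n → ℝ := fun i => if c i < 0 then -1 else 1 with hμ
    have hμpm : ∀ i, μ i = 1 ∨ μ i = -1 := by
      intro i; by_cases h : c i < 0 <;> simp [hμ, h]
    have hμc : ∀ i, μ i * c i = |c i| := by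
      intro i
      by_cases h : c i < 0
      · simp [hμ, h, abs_of_neg h]
      · simp [hμ, h, abs_of_nonneg (not_lt.mp h)]
    have hμprod : (∏ i, μ i) = 1 ∨ (∏ i, μ i) = -1 := by
      induction' (univ : Finset (Fin n)) using Finset.induction with a s ha ih
      · left; simp
      · rw [Finset.prod_insert ha]
        rcases ih with h|h <;> rcases hμpm a with h'|h' <;> rw [h, h'] <;> norm_num
    -- the key contradiction: for some even vertex v, f x ≤ f v, contradicting f v < u < f x
    have habs : ∀ i, c i * x i ≤ |c i| := by
      intro i
      calc c i * x i ≤ |c i * x i| := le_abs_self _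
        _ = |c i| * |x i| := abs_mul _ _
        _ ≤ |c i| * 1 := mul_le_mul_of_nonneg_left (hx i) (abs_nonneg _)
        _ = |c i| := mul_one _
    have key : ∃ v ∈ evenVertices n, ∑ i, c i * x i ≤ ∑ i, c i * v i := by
      by_cases hzero : (∏ i, μ i) = 1 ∨ ∃ j, c j = 0
      · -- can find an even vertex v with c·v = ∑ |cᵢ|
        have hex : ∃ v : Fin n → ℝ, (∀ i, v i = 1 ∨ v i = -1) ∧ (∏ i, v i) = 1 ∧
            ∀ i, c i * v i = |c i| := by
          rcases hμprod with hp | hp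
          · exact ⟨μ, hμpm, hp, fun i => by rw [mul_comm]; exact hμc i⟩
          · obtain ⟨j, hj⟩ := hzero.resolve_left (fun h => by rw [h] at hp; norm_num at hp)
            refine ⟨Function.update μ j (-μ j), ?_, ?_, ?_⟩
            · intro i
              by_cases h : i = j
              · subst h; rcases hμpm i with h'|h' <;> simp [h']
              · simp [Function.update_of_ne h, hμpm i]
            · rw [← Finset.prod_erase_mul _ _ (mem_univ j), Function.update_self]
              have he : ∀ i ∈ univ.erase j, Function.update μ j (-μ j) i = μ i := by
                intro i hi
                exact Function.update_of_ne (Finset.ne_of_mem_erase hi) _ _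
              rw [Finset.prod_congr rfl he]
              have hmuj2 : μ j * μ j = 1 := by rcases hμpm j with h|h <;> rw [h] <;> norm_num
              have hpe := Finset.prod_erase_mul univ μ (mem_univ j)
              nlinarith [hpe, hp, hmuj2]
            · intro i
              by_cases h : i = j
              · subst h; simp [hj]
              · rw [Function.update_of_ne h, mul_comm]; exact hμc i
        obtain ⟨v, hv1, hv2, hv3⟩ := hex
        refine ⟨v, ⟨hv1, hv2⟩, ?_⟩
        calc ∑ i, c i * x i ≤ ∑ i, |c i| := Finset.sum_le_sum (fun i _ => habs i)
          _ = ∑ i, c i * v i := by rw [Finset.sum_congr rfl (fun i _ => (hv3 i).symm)]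
      · push_neg at hzero
        obtain ⟨hμodd, hcne⟩ := hzero
        have hμodd : (∏ i, μ i) = -1 := hμprod.resolve_left hμodd
        -- j : argmin of |c i|
        obtain ⟨j, -, hjmin⟩ := Finset.exists_min_image univ (fun i => |c i|)
          ⟨⟨0, hn⟩, mem_univ _⟩
        set m := |c j| with hm
        have hm0 : 0 ≤ m := abs_nonneg _
        have hμx : ∑ i, μ i * x i ≤ (n : ℝ) - 2 := hodd μ hμpm hμodd
        have hcix : ∀ i, c i * x i = m * (μ i * x i) + (|c i| - m) * (μ i * x i) := by
          intro i
          have h2 : μ i * μ i = 1 := by rcases hμpm i with h|h <;> rw [h] <;> norm_num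
          have h3 := hμc i
          linear_combination (μ i * x i) * h3 - (c i * x i) * h2
        have hμxi : ∀ i, μ i * x i ≤ 1 := by
          intro i
          have : |μ i * x i| ≤ 1 := by
            rw [abs_mul]
            rcases hμpm i with h|h <;> simp [h, hx i]
          exact le_trans (le_abs_self _) this
        have hsum1 : ∑ i, c i * x i ≤ m * ((n:ℝ) - 2) + ∑ i, (|c i| - m) := by
          calc ∑ i, c i * x i
              = m * (∑ i, μ i * x i) + ∑ i, (|c i| - m) * (μ i * x i) := by
                rw [Finset.mul_sum, ← Finset.sum_add_distrib]
                exact Finset.sum_congr rfl (fun i _ => hcix i)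
            _ ≤ m * ((n:ℝ) - 2) + ∑ i, (|c i| - m) := by
                have hA : m * (∑ i, μ i * x i) ≤ m * ((n:ℝ)-2) :=
                  mul_le_mul_of_nonneg_left hμx hm0
                have hB : ∑ i, (|c i| - m) * (μ i * x i) ≤ ∑ i, (|c i| - m) := by
                  apply Finset.sum_le_sum
                  intro i _
                  have h1 : 0 ≤ |c i| - m := by
                    have := hjmin i (mem_univ i); linarith
                  nlinarith [hμxi i, h1]
                linarith
        have hsum2 : m * ((n:ℝ) - 2) + ∑ i, (|c i| - m) = (∑ i, |c i|) - 2 * m := by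
          rw [Finset.sum_sub_distrib]
          simp only [Finset.sum_const, Finset.card_univ, Fintype.card_fin, nsmul_eq_mul]
          ring
        -- v : flip μ at j
        refine ⟨Function.update μ j (-μ j), ⟨?_, ?_⟩, ?_⟩
        · intro i
          by_cases h : i = j
          · subst h; rcases hμpm i with h'|h' <;> simp [h']
          · simp [Function.update_of_ne h, hμpm i]
        · rw [← Finset.prod_erase_mul _ _ (mem_univ j), Function.update_self]
          have he : ∀ i ∈ univ.erase j, Function.update μ j (-μ j) i = μ i := by
            intro i hi
            exact Function.update_of_ne (Finset.ne_of_mem_erase hi) _ _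
          rw [Finset.prod_congr rfl he]
          have hmuj2 : μ j * μ j = 1 := by rcases hμpm j with h|h <;> rw [h] <;> norm_num
          have := Finset.prod_erase_mul univ μ (mem_univ j)
          nlinarith [this, hμodd, hmuj2]
        · have hcv : ∑ i, c i * Function.update μ j (-μ j) i = (∑ i, |c i|) - 2 * m := by
            rw [← Finset.sum_erase_add _ _ (mem_univ j), Function.update_self]
            have he : ∀ i ∈ univ.erase j, c i * Function.update μ j (-μ j) i = |c i| := by
              intro i hi
              rw [Function.update_of_ne (Finset.ne_of_mem_erase hi), mul_comm]
              exact hμc i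
            rw [Finset.sum_congr rfl he]
            have hcj : c j * (-μ j) = -m := by
              have := hμc j
              rw [hm]
              nlinarith [this]
            rw [hcj, ← Finset.sum_erase_add univ (fun i => |c i|) (mem_univ j)]
            ring
          rw [hcv]
          linarith [hsum1, hsum2]
    obtain ⟨v, hv, hle⟩ := key
    have h1 : f v < u := hfu v (subset_convexHull ℝ _ hv)
    rw [hfy v] at h1
    rw [hfy x] at hux
    linarith
end

section
/- Let D ⊂ [-1,1]^n be the demicube (convex hull of even vertices) and let x ∈ [-1,1]^n with s₁(x) > n - 2. Then the L¹ distance from x to D equals s₁(x) - (n - 2), and this distance is achieved by a point of D differing from x in exactly one coordinate. -/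
private lemma pm_finite (n : ℕ) : {l : Fin n → ℝ | ∀ i, l i = 1 ∨ l i = -1}.Finite := by
  apply Set.Finite.subset (Set.Finite.pi (t := fun _ : Fin n => ({1, -1} : Set ℝ))
    (fun _ => (Set.finite_singleton (-1:ℝ)).insert 1))
  intro l hl i _
  rcases hl i with h | h <;> simp [h]

private lemma term_le_one {a b : ℝ} (ha : a = 1 ∨ a = -1) (hb : |b| ≤ 1) : a * b ≤ 1 := by
  have h1 : |a| = 1 := by rcases ha with h | h <;> simp [h]
  calc a * b ≤ |a * b| := le_abs_self _
    _ = |a| * |b| := abs_mul _ _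
    _ ≤ 1 := by rw [h1, one_mul]; exact hb

private lemma prod_pm {n : ℕ} {l : Fin n → ℝ} (hl : ∀ i, l i = 1 ∨ l i = -1) :
    (∏ i, l i) = 1 ∨ (∏ i, l i) = -1 := by
  have : |∏ i, l i| = 1 := by
    rw [Finset.abs_prod]
    exact Finset.prod_eq_one fun i _ => by rcases hl i with h | h <;> simp [h]
  exact (abs_eq zero_le_one).1 this

private lemma s1_spec (n : ℕ) (hn : 1 ≤ n) (x : Fin n → ℝ) :
    ∃ l : Fin n → ℝ, (∀ i, l i = 1 ∨ l i = -1) ∧ (∏ i, l i) = -1 ∧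
      s1 n x = ∑ i, l i * x i ∧
      ∀ l' : Fin n → ℝ, (∀ i, l' i = 1 ∨ l' i = -1) → (∏ i, l' i) = -1 →
        ∑ i, l' i * x i ≤ s1 n x := by
  classical
  have hfin : {s : ℝ | ∃ l : Fin n → ℝ, (∀ i, l i = 1 ∨ l i = -1) ∧ (∏ i, l i) = -1 ∧
      s = ∑ i, l i * x i}.Finite := by
    apply Set.Finite.subset (Set.Finite.image (fun l : Fin n → ℝ => ∑ i, l i * x i)
      (pm_finite n))
    rintro r ⟨l, hl1, _, rfl⟩
    exact ⟨l, hl1, rfl⟩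
  have hne : {s : ℝ | ∃ l : Fin n → ℝ, (∀ i, l i = 1 ∨ l i = -1) ∧ (∏ i, l i) = -1 ∧
      s = ∑ i, l i * x i}.Nonempty := by
    refine ⟨∑ i, (fun i : Fin n => if i = (⟨0, hn⟩ : Fin n) then (-1:ℝ) else 1) i * x i,
      (fun i : Fin n => if i = (⟨0, hn⟩ : Fin n) then (-1:ℝ) else 1), fun i => ?_, ?_, rfl⟩
    · by_cases h : i = (⟨0, hn⟩ : Fin n) <;> simp [h]
    · rw [Finset.prod_eq_single (⟨0, hn⟩ : Fin n) (fun b _ hb => if_neg hb)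
        (fun h => absurd (Finset.mem_univ _) h)]
      simp
  have hmem : s1 n x ∈ {s : ℝ | ∃ l : Fin n → ℝ, (∀ i, l i = 1 ∨ l i = -1) ∧
      (∏ i, l i) = -1 ∧ s = ∑ i, l i * x i} := hne.csSup_mem hfin
  obtain ⟨l, h1, h2, h3⟩ := hmem
  refine ⟨l, h1, h2, h3, fun l' a b => ?_⟩
  exact le_csSup hfin.bddAbove ⟨l', a, b, rfl⟩

private lemma hull_bound {n : ℕ} {y : Fin n → ℝ} (hy : y ∈ convexHull ℝ (evenVertices n))
    (l : Fin n → ℝ) (hl1 : ∀ i, l i = 1 ∨ l i = -1) (hl2 : (∏ i, l i) = -1) :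
    ∑ i, l i * y i ≤ (n : ℝ) - 2 := by
  classical
  have hlin : IsLinearMap ℝ (fun w : Fin n → ℝ => ∑ i, l i * w i) := by
    constructor
    · intro a b; simp [mul_add, Finset.sum_add_distrib]
    · intro c a
      simp only [Pi.smul_apply, smul_eq_mul]
      rw [Finset.mul_sum]
      exact Finset.sum_congr rfl fun i _ => by ring
  have hconv : Convex ℝ {w : Fin n → ℝ | ∑ i, l i * w i ≤ (n:ℝ) - 2} :=
    convex_halfSpace_le hlin _
  have hsub : evenVertices n ⊆ {w : Fin n → ℝ | ∑ i, l i * w i ≤ (n:ℝ) - 2} := by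
    rintro v ⟨hv1, hv2⟩
    have hterm : ∀ i, l i * v i = 1 ∨ l i * v i = -1 := fun i => by
      rcases hl1 i with h | h <;> rcases hv1 i with h' | h' <;> simp [h, h']
    have hex : ∃ k, l k * v k = -1 := by
      by_contra hc
      push_neg at hc
      have hall : ∀ i, l i * v i = 1 := fun i => (hterm i).resolve_right (hc i)
      have hp : ∏ i, (l i * v i) = 1 := Finset.prod_eq_one fun i _ => hall i
      rw [Finset.prod_mul_distrib, hl2, hv2] at hp
      norm_num at hp
    obtain ⟨k, hk⟩ := hex
    have hn' : 0 < n := k.pos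
    have hsplit : ∑ i, l i * v i = (∑ i ∈ Finset.univ.erase k, l i * v i) + l k * v k := by
      rw [Finset.sum_erase_eq_sub (Finset.mem_univ k)]; ring
    have hb : ∑ i ∈ Finset.univ.erase k, l i * v i ≤ (n:ℝ) - 1 := by
      have h := Finset.sum_le_card_nsmul (Finset.univ.erase k) (fun i => l i * v i) 1
        (fun i _ => by rcases hterm i with h | h <;> simp [h] <;> norm_num)
      rw [nsmul_eq_mul, mul_one] at h
      have hc : ((Finset.univ.erase k).card : ℝ) = (n:ℝ) - 1 := by
        rw [Finset.card_erase_of_mem (Finset.mem_univ k), Finset.card_univ, Fintype.card_fin,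
          Nat.cast_pred hn']
      rw [hc] at h
      exact h
    show ∑ i, l i * v i ≤ (n:ℝ) - 2
    rw [hsplit, hk]
    linarith
  exact convexHull_min hsub hconv hy

private lemma mem_demicube (n : ℕ) (hn : 1 ≤ n) (y : Fin n → ℝ) (hy : ∀ i, |y i| ≤ 1)
    (hodd : ∀ l : Fin n → ℝ, (∀ i, l i = 1 ∨ l i = -1) → (∏ i, l i) = -1 →
      ∑ i, l i * y i ≤ (n:ℝ) - 2) :
    y ∈ convexHull ℝ (evenVertices n) := by
  classical
  by_contra hmem
  have hfin : (evenVertices n).Finite :=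
    Set.Finite.subset (pm_finite n) (fun v hv => hv.1)
  have hcl : IsClosed (convexHull ℝ (evenVertices n)) :=
    (hfin.isCompact_convexHull (𝕜 := ℝ)).isClosed
  obtain ⟨f, u, hfu, huy⟩ := geometric_hahn_banach_closed_point
    (convex_convexHull ℝ _) hcl hmem
  set c : Fin n → ℝ := fun i => f (fun j => if i = j then 1 else 0) with hc
  have hfz : ∀ z : Fin n → ℝ, f z = ∑ i, z i * c i := by
    intro z
    conv_lhs => rw [pi_eq_sum_univ z]
    rw [map_sum]
    exact Finset.sum_congr rfl fun i _ => by rw [map_smul, smul_eq_mul]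
  set sg : Fin n → ℝ := fun i => if 0 ≤ c i then 1 else -1 with hsdef
  have hs1 : ∀ i, sg i = 1 ∨ sg i = -1 := fun i => by
    by_cases h : 0 ≤ c i <;> simp [hsdef, h]
  have hcs : ∀ i, c i = sg i * |c i| := by
    intro i
    by_cases h : 0 ≤ c i
    · simp [hsdef, h, abs_of_nonneg h]
    · push_neg at h
      simp [hsdef, not_le.2 h, abs_of_neg h]
  suffices hS : ∃ v ∈ evenVertices n, f y ≤ f v by
    obtain ⟨v, hv, hle⟩ := hS
    have := hfu v (subset_convexHull ℝ _ hv)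
    linarith
  have hyc : ∀ i, y i * c i ≤ |c i| := by
    intro i
    calc y i * c i ≤ |y i * c i| := le_abs_self _
      _ = |y i| * |c i| := abs_mul _ _
      _ ≤ 1 * |c i| := mul_le_mul_of_nonneg_right (hy i) (abs_nonneg _)
      _ = |c i| := one_mul _
  have hsq : ∀ i, sg i * sg i = 1 := fun i => by
    rcases hs1 i with h | h <;> rw [h] <;> norm_num
  have hsc : ∀ i, sg i * c i = |c i| := by
    intro i
    by_cases h : 0 ≤ c i
    · simp [hsdef, h, abs_of_nonneg h]
    · push_neg at h
      simp [hsdef, not_le.2 h, abs_of_neg h]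
  rcases prod_pm hs1 with hps | hps
  · refine ⟨sg, ⟨hs1, hps⟩, ?_⟩
    rw [hfz y, hfz sg]
    apply Finset.sum_le_sum
    intro i _
    have := hyc i
    have := hsc i
    linarith
  · obtain ⟨j, -, hj⟩ := Finset.exists_min_image Finset.univ (fun i => |c i|)
      ⟨⟨0, hn⟩, Finset.mem_univ _⟩
    set v : Fin n → ℝ := Function.update sg j (-(sg j)) with hv
    have hv1 : ∀ i, v i = 1 ∨ v i = -1 := by
      intro i
      by_cases h : i = j
      · subst h
        rw [hv, Function.update_self]
        rcases hs1 i with h' | h' <;> rw [h'] <;> norm_num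
      · rw [hv, Function.update_of_ne h]
        exact hs1 i
    have hv2 : (∏ i, v i) = 1 := by
      rw [hv, Finset.prod_update_of_mem (Finset.mem_univ j), ← Finset.erase_eq]
      have h2 := Finset.mul_prod_erase Finset.univ sg (Finset.mem_univ j)
      rw [hps] at h2
      linear_combination -h2
    refine ⟨v, ⟨hv1, hv2⟩, ?_⟩
    have hfv : f v = (∑ i, |c i|) - 2 * |c j| := by
      rw [hfz v]
      have e1 : ∑ i, v i * c i = (∑ i ∈ Finset.univ.erase j, v i * c i) + v j * c j := by
        rw [Finset.sum_erase_eq_sub (Finset.mem_univ j)]; ring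
      have e2 : ∀ i ∈ Finset.univ.erase j, v i * c i = |c i| := by
        intro i hi
        rw [hv, Function.update_of_ne (Finset.ne_of_mem_erase hi)]
        exact hsc i
      have e3 : v j * c j = -|c j| := by
        rw [hv, Function.update_self]
        linear_combination -(hsc j)
      rw [e1, Finset.sum_congr rfl e2, Finset.sum_erase_eq_sub (Finset.mem_univ j), e3]
      ring
    rw [hfz y, hfv]
    have e : ∑ i, y i * c i
        = (∑ i, (|c i| - |c j|) * (sg i * y i)) + |c j| * (∑ i, sg i * y i) := by
      rw [Finset.mul_sum, ← Finset.sum_add_distrib]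
      refine Finset.sum_congr rfl fun i _ => ?_
      linear_combination (sg i * y i) * hsc i - (c i * y i) * hsq i
    rw [e]
    have b1 : ∑ i, (|c i| - |c j|) * (sg i * y i) ≤ ∑ i, (|c i| - |c j|) := by
      apply Finset.sum_le_sum
      intro i _
      have h0 : 0 ≤ |c i| - |c j| := by
        have := hj i (Finset.mem_univ i); linarith
      have h1 : sg i * y i ≤ 1 := term_le_one (hs1 i) (hy i)
      nlinarith
    have b2 : |c j| * (∑ i, sg i * y i) ≤ |c j| * ((n:ℝ) - 2) :=
      mul_le_mul_of_nonneg_left (hodd sg hs1 hps) (abs_nonneg _)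
    have b3 : ∑ i, (|c i| - |c j|) = (∑ i, |c i|) - (n:ℝ) * |c j| := by
      rw [Finset.sum_sub_distrib, Finset.sum_const, Finset.card_univ, Fintype.card_fin,
        nsmul_eq_mul]
    have b4 : (∑ i, |c i|) - (n:ℝ) * |c j| + |c j| * ((n:ℝ) - 2)
        = (∑ i, |c i|) - 2 * |c j| := by ring
    linarith

/-- For x ∈ [-1,1]ⁿ with s₁(x) > n-2, the L¹ distance from x to the demicube
equals s₁(x) - (n-2), attained at a point differing from x in one coordinate. -/
theorem stmt7 (n : ℕ) (hn : 1 ≤ n) (x : Fin n → ℝ) (hx : ∀ i, |x i| ≤ 1)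
    (hs : (n : ℝ) - 2 < s1 n x) :
    sInf {d : ℝ | ∃ y ∈ convexHull ℝ (evenVertices n), d = ∑ i, |x i - y i|}
      = s1 n x - ((n : ℝ) - 2) ∧
    ∃ y ∈ convexHull ℝ (evenVertices n),
      (∑ i, |x i - y i|) = s1 n x - ((n : ℝ) - 2) ∧
      ∃ j, ∀ i, i ≠ j → y i = x i := by
  classical
  obtain ⟨l, hl1, hl2, hl3, hub⟩ := s1_spec n hn x
  set s := s1 n x with hsdef
  set j : Fin n := ⟨0, hn⟩ with hjdef
  set y : Fin n → ℝ := Function.update x j (x j - l j * (s - ((n:ℝ) - 2))) with hy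
  have hlsq : l j * l j = 1 := by rcases hl1 j with h | h <;> rw [h] <;> norm_num
  have habsl : ∀ i, |l i| = 1 := fun i => by rcases hl1 i with h | h <;> simp [h]
  have hterm : ∀ (l' : Fin n → ℝ), (∀ i, l' i = 1 ∨ l' i = -1) → ∀ i, l' i * x i ≤ 1 :=
    fun l' h i => term_le_one (h i) (hx i)
  have hyj : y j = x j - l j * (s - ((n:ℝ) - 2)) := by rw [hy, Function.update_self]
  have hyne : ∀ i, i ≠ j → y i = x i := fun i hi => by rw [hy, Function.update_of_ne hi]
  have hpos : 0 < s - ((n:ℝ) - 2) := by linarith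
  have hsplit : s = (∑ i ∈ Finset.univ.erase j, l i * x i) + l j * x j := by
    rw [hl3, Finset.sum_erase_eq_sub (Finset.mem_univ j)]; ring
  have hcard : ((Finset.univ.erase j).card : ℝ) = (n:ℝ) - 1 := by
    rw [Finset.card_erase_of_mem (Finset.mem_univ j), Finset.card_univ, Fintype.card_fin,
      Nat.cast_pred (by omega)]
  have hsum_le : ∀ (l' : Fin n → ℝ), (∀ i, l' i = 1 ∨ l' i = -1) →
      ∑ i ∈ Finset.univ.erase j, l' i * x i ≤ (n:ℝ) - 1 := by
    intro l' h
    have hh := Finset.sum_le_card_nsmul (Finset.univ.erase j) (fun i => l' i * x i) 1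
      (fun i _ => hterm l' h i)
    rw [nsmul_eq_mul, mul_one, hcard] at hh
    exact hh
  have hbound_t : s - l j * x j ≤ (n:ℝ) - 1 := by
    have := hsum_le l hl1
    linarith [hsplit]
  have hycube : ∀ i, |y i| ≤ 1 := by
    intro i
    by_cases h : i = j
    · have heq : l j * y j = l j * x j - (s - ((n:ℝ) - 2)) := by
        rw [hyj]; linear_combination (-(s - ((n:ℝ) - 2))) * hlsq
      have up : l j * y j ≤ 1 := by
        have := hterm l hl1 j
        linarith
      have lo : -1 ≤ l j * y j := by linarith [hbound_t]
      have habs : |y j| = |l j * y j| := by rw [abs_mul, habsl j, one_mul]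
      rw [h, habs]
      exact abs_le.2 ⟨lo, up⟩
    · rw [hyne i h]; exact hx i
  have hyodd : ∀ l' : Fin n → ℝ, (∀ i, l' i = 1 ∨ l' i = -1) → (∏ i, l' i) = -1 →
      ∑ i, l' i * y i ≤ (n:ℝ) - 2 := by
    intro l' h1 h2
    have e1 : ∑ i ∈ Finset.univ.erase j, l' i * y i
        = ∑ i ∈ Finset.univ.erase j, l' i * x i :=
      Finset.sum_congr rfl fun i hi => by rw [hyne i (Finset.ne_of_mem_erase hi)]
    have e2 : ∑ i, l' i * y i = (∑ i ∈ Finset.univ.erase j, l' i * y i) + l' j * y j := by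
      rw [Finset.sum_erase_eq_sub (Finset.mem_univ j)]; ring
    by_cases hc : l' j = l j
    · have heq : l' j * y j = l' j * x j - (s - ((n:ℝ) - 2)) := by
        rw [hyj, hc]; linear_combination (-(s - ((n:ℝ) - 2))) * hlsq
      have e3 : (∑ i ∈ Finset.univ.erase j, l' i * x i) + l' j * x j = ∑ i, l' i * x i := by
        rw [Finset.sum_erase_eq_sub (Finset.mem_univ j)]; ring
      have hub' := hub l' h1 h2
      rw [e2, e1]
      linarith
    · have hlj' : l' j = -(l j) := by
        rcases h1 j with h | h <;> rcases hl1 j with h' | h' <;>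
          simp [h, h'] at hc ⊢ <;> norm_num
      have hex : ∃ i, i ≠ j ∧ l' i ≠ l i := by
        by_contra hcon
        push_neg at hcon
        have eprod : ∏ i ∈ Finset.univ.erase j, l' i = ∏ i ∈ Finset.univ.erase j, l i :=
          Finset.prod_congr rfl fun i hi => hcon i (Finset.ne_of_mem_erase hi)
        have p1 := Finset.mul_prod_erase Finset.univ l' (Finset.mem_univ j)
        have p2 := Finset.mul_prod_erase Finset.univ l (Finset.mem_univ j)
        rw [h2] at p1
        rw [hl2] at p2
        rw [hlj', eprod] at p1
        exact absurd (by linear_combination p1 + p2 : (0:ℝ) = -2) (by norm_num)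
      obtain ⟨i₀, hi0j, hi0⟩ := hex
      have hli0 : l' i₀ = -(l i₀) := by
        rcases h1 i₀ with h | h <;> rcases hl1 i₀ with h' | h' <;>
          simp [h, h'] at hi0 ⊢ <;> norm_num
      have hi0mem : i₀ ∈ Finset.univ.erase j := Finset.mem_erase.2 ⟨hi0j, Finset.mem_univ _⟩
      have eA' : ∑ i ∈ Finset.univ.erase j, l' i * x i
          = (∑ i ∈ (Finset.univ.erase j).erase i₀, l' i * x i) + l' i₀ * x i₀ := by
        rw [Finset.sum_erase_eq_sub hi0mem]; ring
      have eA : ∑ i ∈ Finset.univ.erase j, l i * x i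
          = (∑ i ∈ (Finset.univ.erase j).erase i₀, l i * x i) + l i₀ * x i₀ := by
        rw [Finset.sum_erase_eq_sub hi0mem]; ring
      have hn2 : 2 ≤ n := by
        have h := Fintype.one_lt_card_iff_nontrivial.2 ⟨i₀, j, hi0j⟩
        rw [Fintype.card_fin] at h
        omega
      have hcardA : (((Finset.univ.erase j).erase i₀).card : ℝ) = (n:ℝ) - 2 := by
        rw [Finset.card_erase_of_mem hi0mem, Finset.card_erase_of_mem (Finset.mem_univ j),
          Finset.card_univ, Fintype.card_fin]
        have : n - 1 - 1 = n - 2 := by omega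
        rw [this, Nat.cast_sub hn2]
        norm_num
      have sA' : ∑ i ∈ (Finset.univ.erase j).erase i₀, l' i * x i ≤ (n:ℝ) - 2 := by
        have hh := Finset.sum_le_card_nsmul ((Finset.univ.erase j).erase i₀)
          (fun i => l' i * x i) 1 (fun i _ => hterm l' h1 i)
        rw [nsmul_eq_mul, mul_one, hcardA] at hh
        exact hh
      have sA : ∑ i ∈ (Finset.univ.erase j).erase i₀, l i * x i ≤ (n:ℝ) - 2 := by
        have hh := Finset.sum_le_card_nsmul ((Finset.univ.erase j).erase i₀)
          (fun i => l i * x i) 1 (fun i _ => hterm l hl1 i)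
        rw [nsmul_eq_mul, mul_one, hcardA] at hh
        exact hh
      have hjy : l' j * y j = -(l j * x j) + (s - ((n:ℝ) - 2)) := by
        rw [hyj, hlj']
        linear_combination (s - ((n:ℝ) - 2)) * hlsq
      have hs_eq : s = (∑ i ∈ (Finset.univ.erase j).erase i₀, l i * x i)
          + l i₀ * x i₀ + l j * x j := by
        linear_combination hsplit + eA
      rw [e2, e1, eA', hli0, hjy]
      linarith
  have hymem : y ∈ convexHull ℝ (evenVertices n) := mem_demicube n hn y hycube hyodd
  have hdist : ∑ i, |x i - y i| = s - ((n:ℝ) - 2) := by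
    rw [Finset.sum_eq_single j]
    · rw [hyj]
      have heq : x j - (x j - l j * (s - ((n:ℝ) - 2))) = l j * (s - ((n:ℝ) - 2)) := by ring
      rw [heq, abs_mul, habsl j, one_mul, abs_of_pos hpos]
    · intro i _ hi
      rw [hyne i hi]
      simp
    · intro h
      exact absurd (Finset.mem_univ j) h
  have hlb : ∀ z ∈ convexHull ℝ (evenVertices n), s - ((n:ℝ) - 2) ≤ ∑ i, |x i - z i| := by
    intro z hz
    have h1 : ∑ i, l i * (x i - z i) ≤ ∑ i, |x i - z i| := by
      apply Finset.sum_le_sum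
      intro i _
      calc l i * (x i - z i) ≤ |l i * (x i - z i)| := le_abs_self _
        _ = |x i - z i| := by rw [abs_mul, habsl i, one_mul]
    have h2 : ∑ i, l i * (x i - z i) = (∑ i, l i * x i) - ∑ i, l i * z i := by
      rw [← Finset.sum_sub_distrib]
      exact Finset.sum_congr rfl fun i _ => by ring
    have h3 := hull_bound hz l hl1 hl2
    linarith [hl3]
  have hmemd : s - ((n:ℝ) - 2) ∈ {d : ℝ | ∃ y ∈ convexHull ℝ (evenVertices n),
      d = ∑ i, |x i - y i|} := ⟨y, hymem, hdist.symm⟩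
  constructor
  · apply le_antisymm
    · exact csInf_le ⟨s - ((n:ℝ) - 2), by rintro d ⟨z, hz, rfl⟩; exact hlb z hz⟩ hmemd
    · exact le_csInf ⟨_, hmemd⟩ (by rintro d ⟨z, hz, rfl⟩; exact hlb z hz)
  · exact ⟨y, hymem, hdist, j, hyne⟩
end

section
/- A consistently connected cyclic system of rank n with bunch expectation vector e ∈ [-1,1]^n (e_i = E[R_i^i R_{i⊕1}^i] with ±1 coding) is noncontextual if and only if s₁(e) ≤ n - 2 AND e lies in the n-box ∏ᵢ[|aᵢ+bᵢ|-1, 1-|aᵢ-bᵢ|], where aᵢ, bᵢ are the marginal expectations in context i. Equivalently, the noncontextuality polytope E is the intersection of the demicube with this box. -/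
noncomputable section AuxNC

def sg (b : Bool) : ℝ := if b then 1 else -1

lemma sg_cases (b : Bool) : sg b = 1 ∨ sg b = -1 := by cases b <;> simp [sg]

lemma sg_mul_self (b : Bool) : sg b * sg b = 1 := by cases b <;> norm_num [sg]

lemma fin_mk_add_one {n : ℕ} (i : ℕ) (h' : i < n + 1) (h : i + 1 < n + 1) :
    (⟨i, h'⟩ : Fin (n+1)) + 1 = ⟨i + 1, h⟩ := by
  apply Fin.ext
  rw [Fin.val_add_one]
  have : (⟨i, h'⟩ : Fin (n+1)) ≠ Fin.last n := by simp [Fin.ext_iff]; omega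
  simp [this]

lemma castSucc_add_one {n : ℕ} (i : Fin (n+1)) (hi : i ≠ Fin.last n) :
    i.castSucc + 1 = (i + 1).castSucc := by
  have hv : i.val < n := Fin.val_lt_last hi
  apply Fin.ext
  rw [Fin.coe_castSucc, Fin.val_add_one, Fin.val_add_one]
  have h1 : i.castSucc ≠ Fin.last (n+1) := by
    simp [Fin.ext_iff]; omega
  simp [h1, hi]

lemma telesc (a e l : ℕ → ℝ) : ∀ k : ℕ,
    (∀ i < k, l i = 1 ∨ l i = -1) →
    (∀ i < k, |a i - l i * a (i+1)| ≤ 1 - l i * e i) →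
    ∑ i ∈ Finset.range k, l i * e i
      + |a 0 - (∏ i ∈ Finset.range k, l i) * a k| ≤ (k : ℝ) := by
  intro k
  induction k with
  | zero => simp
  | succ k IH =>
    intro hl hb
    have IH' := IH (fun i hi => hl i (by omega)) (fun i hi => hb i (by omega))
    rw [Finset.sum_range_succ, Finset.prod_range_succ]
    have habsP : |∏ i ∈ Finset.range k, l i| = 1 := by
      rw [Finset.abs_prod]
      refine Finset.prod_eq_one (fun i hi => ?_)
      rcases hl i (by simp at hi; omega) with h | h <;> simp [h]
    have key : |a 0 - (∏ i ∈ Finset.range k, l i) * l k * a (k+1)|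
        ≤ |a 0 - (∏ i ∈ Finset.range k, l i) * a k| + |a k - l k * a (k+1)| := by
      have heq : a 0 - (∏ i ∈ Finset.range k, l i) * l k * a (k+1)
          = (a 0 - (∏ i ∈ Finset.range k, l i) * a k)
            + (∏ i ∈ Finset.range k, l i) * (a k - l k * a (k+1)) := by ring
      rw [heq]
      calc _ ≤ |a 0 - (∏ i ∈ Finset.range k, l i) * a k|
            + |(∏ i ∈ Finset.range k, l i) * (a k - l k * a (k+1))| := abs_add_le _ _
        _ = _ := by rw [abs_mul, habsP, one_mul]
    have hbk := hb k (by omega)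
    push_cast
    linarith

lemma pos2 (x y p : ℝ) (h1 : |x + y| - 1 ≤ p) (h2 : p ≤ 1 - |x - y|) (σ τ : Bool) :
    0 ≤ (1 + sg σ * x + sg τ * y + sg σ * sg τ * p) / 4 := by
  have a1 : x + y ≤ |x + y| := le_abs_self _
  have a2 : -(x + y) ≤ |x + y| := neg_le_abs _
  have a3 : x - y ≤ |x - y| := le_abs_self _
  have a4 : -(x - y) ≤ |x - y| := neg_le_abs _
  cases σ <;> cases τ <;> simp [sg] <;> linarith

lemma triangle (x y z p q r : ℝ)
    (bp1 : |x + y| - 1 ≤ p) (bp2 : p ≤ 1 - |x - y|)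
    (bq1 : |y + z| - 1 ≤ q) (bq2 : q ≤ 1 - |y - z|)
    (br1 : |z + x| - 1 ≤ r) (br2 : r ≤ 1 - |z - x|)
    (c1 : p + q - r ≤ 1) (c2 : p - q + r ≤ 1) (c3 : -p + q + r ≤ 1) (c4 : -p - q - r ≤ 1) :
    ∃ v : Bool → Bool → Bool → ℝ, (∀ α β γ, 0 ≤ v α β γ) ∧
      (∑ α, ∑ β, ∑ γ, v α β γ) = 1 ∧
      (∀ α γ, (∑ β, v α β γ) = (1 + sg α * x + sg γ * z + sg α * sg γ * r) / 4) ∧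
      (∑ α, ∑ β, ∑ γ, v α β γ * sg β) = y ∧
      (∑ α, ∑ β, ∑ γ, v α β γ * (sg α * sg β)) = p ∧
      (∑ α, ∑ β, ∑ γ, v α β γ * (sg β * sg γ)) = q := by
  -- extract linear consequences of the abs hypotheses
  have pxy : x + y ≤ |x + y| := le_abs_self _
  have pxy' : -(x + y) ≤ |x + y| := neg_le_abs _
  have mxy : x - y ≤ |x - y| := le_abs_self _
  have mxy' : -(x - y) ≤ |x - y| := neg_le_abs _
  have pyz : y + z ≤ |y + z| := le_abs_self _
  have pyz' : -(y + z) ≤ |y + z| := neg_le_abs _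
  have myz : y - z ≤ |y - z| := le_abs_self _
  have myz' : -(y - z) ≤ |y - z| := neg_le_abs _
  have pzx : z + x ≤ |z + x| := le_abs_self _
  have pzx' : -(z + x) ≤ |z + x| := neg_le_abs _
  have mzx : z - x ≤ |z - x| := le_abs_self _
  have mzx' : -(z - x) ≤ |z - x| := neg_le_abs _
  set t : ℝ := max (max (-(1 + x + y + z + p + q + r)) (-(1 + x - y - z - p + q - r)))
      (max (-(1 - x + y - z - p - q + r)) (-(1 - x - y + z + p - q - r))) with ht
  have hl1 : -(1 + x + y + z + p + q + r) ≤ t := le_max_of_le_left (le_max_left _ _)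
  have hl2 : -(1 + x - y - z - p + q - r) ≤ t := le_max_of_le_left (le_max_right _ _)
  have hl3 : -(1 - x + y - z - p - q + r) ≤ t := le_max_of_le_right (le_max_left _ _)
  have hl4 : -(1 - x - y + z + p - q - r) ≤ t := le_max_of_le_right (le_max_right _ _)
  have hu1 : t ≤ 1 + x + y - z + p - q - r := by
    rw [ht]; refine max_le (max_le ?_ ?_) (max_le ?_ ?_) <;> linarith
  have hu2 : t ≤ 1 + x - y + z - p - q + r := by
    rw [ht]; refine max_le (max_le ?_ ?_) (max_le ?_ ?_) <;> linarith
  have hu3 : t ≤ 1 - x + y + z - p + q - r := by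
    rw [ht]; refine max_le (max_le ?_ ?_) (max_le ?_ ?_) <;> linarith
  have hu4 : t ≤ 1 - x - y - z + p + q + r := by
    rw [ht]; refine max_le (max_le ?_ ?_) (max_le ?_ ?_) <;> linarith
  refine ⟨fun α β γ => (1 + sg α * x + sg β * y + sg γ * z + sg α * sg β * p
      + sg β * sg γ * q + sg γ * sg α * r + sg α * sg β * sg γ * t) / 8, ?_, ?_, ?_, ?_, ?_, ?_⟩
  · intro α β γ; cases α <;> cases β <;> cases γ <;> simp [sg] <;> linarith
  · simp [Fintype.sum_bool, sg]; ring
  · intro α γ; cases α <;> cases γ <;> simp [Fintype.sum_bool, sg] <;> ring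
  · simp [Fintype.sum_bool, sg]; ring
  · simp [Fintype.sum_bool, sg]; ring
  · simp [Fintype.sum_bool, sg]; ring


lemma keystep (k : ℕ)
    (IH : ∀ (a e : Fin (k+2) → ℝ),
      (∀ i, |a i + a (i+1)| - 1 ≤ e i ∧ e i ≤ 1 - |a i - a (i+1)|) →
      (∀ l : Fin (k+2) → ℝ, (∀ i, l i = 1 ∨ l i = -1) → (∏ i, l i) = -1 →
        ∑ i, l i * e i ≤ (k:ℝ)) →
      ∃ w : (Fin (k+2) → Bool) → ℝ, (∀ s, 0 ≤ w s) ∧ (∑ s, w s) = 1 ∧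
        (∀ i, (∑ s, w s * sg (s i)) = a i) ∧
        (∀ i, (∑ s, w s * (sg (s i) * sg (s (i+1)))) = e i))
    (a e : Fin (k+3) → ℝ)
    (hbox : ∀ i, |a i + a (i+1)| - 1 ≤ e i ∧ e i ≤ 1 - |a i - a (i+1)|)
    (hcyc : ∀ l : Fin (k+3) → ℝ, (∀ i, l i = 1 ∨ l i = -1) → (∏ i, l i) = -1 →
      ∑ i, l i * e i ≤ (k:ℝ) + 1) :
    ∃ w : (Fin (k+3) → Bool) → ℝ, (∀ s, 0 ≤ w s) ∧ (∑ s, w s) = 1 ∧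
      (∀ i, (∑ s, w s * sg (s i)) = a i) ∧
      (∀ i, (∑ s, w s * (sg (s i) * sg (s (i+1)))) = e i) := by
  classical
  -- index abbreviations
  set vK1 : Fin (k+3) := ⟨k+1, by omega⟩ with hvK1def
  have hK1succ : vK1 + 1 = Fin.last (k+2) := by
    rw [hvK1def]
    rw [fin_mk_add_one (n := k+2) (k+1) (by omega) (by omega)]
    rfl
  have hlastsucc : (Fin.last (k+2)) + 1 = (0 : Fin (k+3)) := Fin.last_add_one _
  have hcastK1 : (Fin.last (k+1)).castSucc = vK1 := by
    apply Fin.ext; simp [hvK1def]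
  -- basic bounds
  have habs : ∀ i, |a i| ≤ 1 := by
    intro i
    have h1 := (hbox i).1; have h2 := (hbox i).2
    have h3 : |2 * a i| ≤ |a i + a (i+1)| + |a i - a (i+1)| := by
      have heq : 2 * a i = (a i + a (i+1)) + (a i - a (i+1)) := by ring
      rw [heq]; exact abs_add_le _ _
    rw [abs_mul] at h3
    have : |(2:ℝ)| = 2 := by norm_num
    rw [this] at h3
    linarith
  have hea : ∀ i, |e i| ≤ 1 := by
    intro i
    have h1 := (hbox i).1; have h2 := (hbox i).2
    have h3 := abs_nonneg (a i + a (i+1)); have h4 := abs_nonneg (a i - a (i+1))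
    rw [abs_le]; constructor <;> linarith
  -- values of sign vectors on the path edges
  set val : (Fin (k+1) → Bool) → ℝ :=
    fun ε => ∑ i : Fin (k+1), sg (ε i) * e (i.castSucc.castSucc) with hvaldef
  set Par : (Fin (k+1) → Bool) → ℝ := fun ε => ∏ i, sg (ε i) with hPardef
  set Fp : Finset (Fin (k+1) → Bool) := Finset.univ.filter (fun ε => Par ε = 1) with hFpdef
  set Fm : Finset (Fin (k+1) → Bool) := Finset.univ.filter (fun ε => Par ε = -1) with hFmdef
  have hFp : Fp.Nonempty := by
    refine ⟨fun _ => true, ?_⟩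
    simp [hFpdef, hPardef, sg]
  have hFm : Fm.Nonempty := by
    refine ⟨fun i => decide ¬(i = 0), ?_⟩
    simp only [hFmdef, Finset.mem_filter, Finset.mem_univ, true_and, hPardef]
    have : ∀ i : Fin (k+1), sg (decide ¬(i = 0)) = if i = 0 then (-1:ℝ) else 1 := by
      intro i; by_cases h : i = 0 <;> simp [sg, h]
    rw [Finset.prod_congr rfl (fun i _ => this i)]
    rw [Finset.prod_eq_single 0 (fun b _ hb => by simp [hb]) (by simp)]
    simp
  -- telescoping bound
  have TEL : ∀ ε, val ε + |a 0 - Par ε * a vK1| ≤ (k:ℝ) + 1 := by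
    intro ε
    set aN : ℕ → ℝ := fun i => if h : i < k+3 then a ⟨i, h⟩ else 0 with haN
    set eN : ℕ → ℝ := fun i => if h : i < k+3 then e ⟨i, h⟩ else 0 with heN
    set lN : ℕ → ℝ := fun i => if h : i < k+1 then sg (ε ⟨i, h⟩) else 1 with hlN
    have hl : ∀ i < k+1, lN i = 1 ∨ lN i = -1 := by
      intro i hi; rw [hlN]; simp only [dif_pos hi]; exact sg_cases _
    have hb : ∀ i < k+1, |aN i - lN i * aN (i+1)| ≤ 1 - lN i * eN i := by
      intro i hi
      have hi3 : i < k+3 := by omega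
      have hi3' : i + 1 < k+3 := by omega
      rw [haN, heN, hlN]
      simp only [dif_pos hi, dif_pos hi3, dif_pos hi3']
      have hsucc : (⟨i, hi3⟩ : Fin (k+3)) + 1 = ⟨i+1, hi3'⟩ :=
        fin_mk_add_one (n := k+2) i hi3 hi3'
      have hbi := hbox ⟨i, hi3⟩
      rw [hsucc] at hbi
      rcases sg_cases (ε ⟨i, hi⟩) with h | h <;> rw [h]
      · rw [one_mul, one_mul]
        rcases abs_cases (a ⟨i, hi3⟩ - a ⟨i+1, hi3'⟩) with ⟨hA, _⟩ | ⟨hA, _⟩ <;>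
          rw [hA] at hbi ⊢ <;> linarith [hbi.2]
      · have heq : a ⟨i, hi3⟩ - (-1) * a ⟨i+1, hi3'⟩ = a ⟨i, hi3⟩ + a ⟨i+1, hi3'⟩ := by ring
        rw [heq]
        rcases abs_cases (a ⟨i, hi3⟩ + a ⟨i+1, hi3'⟩) with ⟨hA, _⟩ | ⟨hA, _⟩ <;>
          rw [hA] at hbi ⊢ <;> linarith [hbi.1]
    have h1 := telesc aN eN lN (k+1) hl hb
    have hsum : ∑ i ∈ Finset.range (k+1), lN i * eN i = val ε := by
      rw [hvaldef, ← Fin.sum_univ_eq_sum_range (fun i => lN i * eN i) (k+1)]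
      refine Finset.sum_congr rfl (fun i _ => ?_)
      have hi : (i : ℕ) < k+1 := i.isLt
      have hi3 : (i : ℕ) < k+3 := by omega
      rw [hlN, heN]
      simp only [dif_pos hi, dif_pos hi3]
      rfl
    have hprod : ∏ i ∈ Finset.range (k+1), lN i = Par ε := by
      rw [hPardef, ← Fin.prod_univ_eq_prod_range (fun i => lN i) (k+1)]
      refine Finset.prod_congr rfl (fun i _ => ?_)
      have hi : (i : ℕ) < k+1 := i.isLt
      rw [hlN]
      simp only [dif_pos hi]
    have ha0 : aN 0 = a 0 := by
      rw [haN]; simp only [dif_pos (by omega : 0 < k+3)]; congr 1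
    have haK : aN (k+1) = a vK1 := by
      rw [haN]; simp only [dif_pos (by omega : k+1 < k+3)]; rfl
    rw [hsum, hprod, ha0, haK] at h1
    push_cast at h1
    linarith
  -- cycle extension bound
  have CYCEXT : ∀ ε (s1 s2 : ℝ), (s1 = 1 ∨ s1 = -1) → (s2 = 1 ∨ s2 = -1) →
      Par ε * (s1 * s2) = -1 → val ε + s1 * e vK1 + s2 * e (Fin.last (k+2)) ≤ (k:ℝ) + 1 := by
    intro ε s1 s2 hs1 hs2 hprod
    set l : Fin (k+3) → ℝ := fun i =>
      if h : i.val < k+1 then sg (ε ⟨i.val, h⟩) else if i.val = k+1 then s1 else s2 with hldef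
    have h1 : ∀ i : Fin (k+1), l i.castSucc.castSucc = sg (ε i) := by
      intro i
      have hi : (i.castSucc.castSucc : Fin (k+3)).val = i.val := rfl
      rw [hldef]
      simp only [hi, dif_pos i.isLt]
    have h2 : l vK1 = s1 := by rw [hldef]; simp [hvK1def]
    have h3 : l (Fin.last (k+2)) = s2 := by
      rw [hldef]
      simp [Fin.last]
    have hsplit : ∀ F : Fin (k+3) → ℝ, (∏ i, F i) =
        (∏ i : Fin (k+1), F i.castSucc.castSucc) * F vK1 * F (Fin.last (k+2)) := by
      intro F
      rw [Fin.prod_univ_castSucc (f := F), Fin.prod_univ_castSucc (f := fun i : Fin (k+2) => F i.castSucc)]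
      rw [hcastK1]
    have hsplitS : ∀ F : Fin (k+3) → ℝ, (∑ i, F i) =
        (∑ i : Fin (k+1), F i.castSucc.castSucc) + F vK1 + F (Fin.last (k+2)) := by
      intro F
      rw [Fin.sum_univ_castSucc (f := F), Fin.sum_univ_castSucc (f := fun i : Fin (k+2) => F i.castSucc)]
      rw [hcastK1]
    have hsigns : ∀ i, l i = 1 ∨ l i = -1 := by
      intro i
      rw [hldef]
      by_cases h : i.val < k+1
      · simp only [dif_pos h]; exact sg_cases _
      · simp only [dif_neg h]
        by_cases h' : i.val = k+1
        · simp only [if_pos h']; exact hs1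
        · simp only [if_neg h']; exact hs2
    have hprodl : (∏ i, l i) = -1 := by
      rw [hsplit l, h2, h3]
      rw [Finset.prod_congr rfl (fun i _ => h1 i)]
      rw [mul_assoc]
      exact hprod
    have := hcyc l hsigns hprodl
    rw [hsplitS (fun i => l i * e i), h2, h3] at this
    rw [Finset.sum_congr rfl (fun i (_ : i ∈ Finset.univ) => by rw [h1 i])] at this
    exact this
  -- the three intervals
  set Sp : ℝ := Fp.sup' hFp val with hSpdef
  set Sm : ℝ := Fm.sup' hFm val with hSmdef
  set f : ℝ := e vK1 with hfdef
  set g : ℝ := e (Fin.last (k+2)) with hgdef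
  set L1 : ℝ := |a vK1 + a 0| - 1 with hL1def
  set U1 : ℝ := 1 - |a vK1 - a 0| with hU1def
  set L2 : ℝ := |f + g| - 1 with hL2def
  set U2 : ℝ := 1 - |f - g| with hU2def
  set L3 : ℝ := Sp - k with hL3def
  set U3 : ℝ := (k:ℝ) - Sm with hU3def
  have hboxf : |a vK1 + a (Fin.last (k+2))| - 1 ≤ f ∧
      f ≤ 1 - |a vK1 - a (Fin.last (k+2))| := by
    have := hbox vK1; rwa [hK1succ] at this
  have hboxg : |a (Fin.last (k+2)) + a 0| - 1 ≤ g ∧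
      g ≤ 1 - |a (Fin.last (k+2)) - a 0| := by
    have := hbox (Fin.last (k+2)); rwa [hlastsucc] at this
  have h11 : L1 ≤ U1 := by
    have h := abs_le.mp (habs vK1); have h' := abs_le.mp (habs 0)
    rw [hL1def, hU1def]
    rcases abs_cases (a vK1 + a 0) with ⟨hA, _⟩ | ⟨hA, _⟩ <;>
      rcases abs_cases (a vK1 - a 0) with ⟨hB, _⟩ | ⟨hB, _⟩ <;> rw [hA, hB] <;> linarith
  have h22 : L2 ≤ U2 := by
    have h := abs_le.mp (hea vK1); have h' := abs_le.mp (hea (Fin.last (k+2)))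
    rw [hL2def, hU2def, hfdef, hgdef]
    rcases abs_cases (e vK1 + e (Fin.last (k+2))) with ⟨hA, _⟩ | ⟨hA, _⟩ <;>
      rcases abs_cases (e vK1 - e (Fin.last (k+2))) with ⟨hB, _⟩ | ⟨hB, _⟩ <;>
        rw [hA, hB] <;> linarith
  have h12 : L1 ≤ U2 := by
    have t1 : |a vK1 + a 0| ≤ |a vK1 - a (Fin.last (k+2))| + |a (Fin.last (k+2)) + a 0| := by
      have heq : a vK1 + a 0 = (a vK1 - a (Fin.last (k+2))) + (a (Fin.last (k+2)) + a 0) := by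
        ring
      rw [heq]; exact abs_add_le _ _
    have t2 : |a vK1 + a 0| ≤ |a vK1 + a (Fin.last (k+2))| + |a (Fin.last (k+2)) - a 0| := by
      have heq : a vK1 + a 0 = (a vK1 + a (Fin.last (k+2))) - (a (Fin.last (k+2)) - a 0) := by
        ring
      rw [heq]; exact abs_sub _ _
    rw [hL1def, hU2def]
    rcases abs_cases (f - g) with ⟨hA, _⟩ | ⟨hA, _⟩ <;> rw [hA] <;>
      [linarith [hboxf.2, hboxg.1, t1]; linarith [hboxf.1, hboxg.2, t2]]
  have h21 : L2 ≤ U1 := by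
    have t3 : |a vK1 - a 0| ≤ |a vK1 - a (Fin.last (k+2))| + |a (Fin.last (k+2)) - a 0| := by
      have heq : a vK1 - a 0 = (a vK1 - a (Fin.last (k+2))) + (a (Fin.last (k+2)) - a 0) := by
        ring
      rw [heq]; exact abs_add_le _ _
    have t4 : |a vK1 - a 0| ≤ |a vK1 + a (Fin.last (k+2))| + |a (Fin.last (k+2)) + a 0| := by
      have heq : a vK1 - a 0 = (a vK1 + a (Fin.last (k+2))) - (a (Fin.last (k+2)) + a 0) := by
        ring
      rw [heq]; exact abs_sub _ _
    rw [hL2def, hU1def]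
    rcases abs_cases (f + g) with ⟨hA, _⟩ | ⟨hA, _⟩ <;> rw [hA] <;>
      [linarith [hboxf.2, hboxg.2, t3]; linarith [hboxf.1, hboxg.1, t4]]
  have h13 : L1 ≤ U3 := by
    have hSm1 : Sm ≤ (k:ℝ) + 1 - |a vK1 + a 0| := by
      rw [hSmdef]
      refine Finset.sup'_le _ _ (fun ε hε => ?_)
      have hP : Par ε = -1 := (Finset.mem_filter.mp hε).2
      have := TEL ε
      rw [hP] at this
      have heq : a 0 - (-1) * a vK1 = a vK1 + a 0 := by ring
      rw [heq] at this
      linarith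
    rw [hL1def, hU3def]; linarith
  have h31 : L3 ≤ U1 := by
    have hSp1 : Sp ≤ (k:ℝ) + 1 - |a vK1 - a 0| := by
      rw [hSpdef]
      refine Finset.sup'_le _ _ (fun ε hε => ?_)
      have hP : Par ε = 1 := (Finset.mem_filter.mp hε).2
      have := TEL ε
      rw [hP] at this
      have heq : a 0 - 1 * a vK1 = -(a vK1 - a 0) := by ring
      rw [heq, abs_neg] at this
      linarith
    rw [hL3def, hU1def]; linarith
  have h23 : L2 ≤ U3 := by
    have hSm2 : Sm ≤ (k:ℝ) + 1 - |f + g| := by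
      rw [hSmdef]
      refine Finset.sup'_le _ _ (fun ε hε => ?_)
      have hP : Par ε = -1 := (Finset.mem_filter.mp hε).2
      rcases le_or_gt 0 (f + g) with hfg | hfg
      · have := CYCEXT ε 1 1 (Or.inl rfl) (Or.inl rfl) (by rw [hP]; ring)
        rw [abs_of_nonneg hfg]
        linarith
      · have := CYCEXT ε (-1) (-1) (Or.inr rfl) (Or.inr rfl) (by rw [hP]; ring)
        rw [abs_of_neg hfg]
        linarith
    rw [hL2def, hU3def]; linarith
  have h32 : L3 ≤ U2 := by
    have hSp2 : Sp ≤ (k:ℝ) + 1 - |f - g| := by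
      rw [hSpdef]
      refine Finset.sup'_le _ _ (fun ε hε => ?_)
      have hP : Par ε = 1 := (Finset.mem_filter.mp hε).2
      rcases le_or_gt 0 (f - g) with hfg | hfg
      · have := CYCEXT ε 1 (-1) (Or.inl rfl) (Or.inr rfl) (by rw [hP]; ring)
        rw [abs_of_nonneg hfg]
        linarith
      · have := CYCEXT ε (-1) 1 (Or.inr rfl) (Or.inl rfl) (by rw [hP]; ring)
        rw [abs_of_neg hfg]
        linarith
    rw [hL3def, hU2def]; linarith
  have h33 : L3 ≤ U3 := by
    obtain ⟨εp, hpmem, hpeq⟩ := Finset.exists_mem_eq_sup' hFp val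
    obtain ⟨εm, hmmem, hmeq⟩ := Finset.exists_mem_eq_sup' hFm val
    have hPp : Par εp = 1 := (Finset.mem_filter.mp hpmem).2
    have hPm : Par εm = -1 := (Finset.mem_filter.mp hmmem).2
    have hne : εp ≠ εm := by
      intro hh; rw [hh, hPm] at hPp; norm_num at hPp
    obtain ⟨j, hj⟩ := Function.ne_iff.mp hne
    have hsum : Sp + Sm = ∑ i : Fin (k+1),
        (sg (εp i) + sg (εm i)) * e (i.castSucc.castSucc) := by
      rw [hSpdef, hSmdef, hpeq, hmeq, hvaldef]
      rw [← Finset.sum_add_distrib]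
      exact Finset.sum_congr rfl (fun i _ => by ring)
    have hterm : ∀ i : Fin (k+1),
        (sg (εp i) + sg (εm i)) * e (i.castSucc.castSucc) ≤ 2 := by
      intro i
      have := abs_le.mp (hea (i.castSucc.castSucc))
      cases h1 : εp i <;> cases h2 : εm i <;> simp [sg] <;> linarith
    have htermj : (sg (εp j) + sg (εm j)) * e (j.castSucc.castSucc) = 0 := by
      have : sg (εp j) + sg (εm j) = 0 := by
        revert hj; cases εp j <;> cases εm j <;> simp [sg]
      rw [this, zero_mul]
    have hbound : ∑ i : Fin (k+1),
        (sg (εp i) + sg (εm i)) * e (i.castSucc.castSucc) ≤ 2 * k := by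
      rw [← Finset.sum_erase_add _ _ (Finset.mem_univ j), htermj, add_zero]
      have hcard : (Finset.univ.erase j).card = k := by
        rw [Finset.card_erase_of_mem (Finset.mem_univ j)]
        simp
      calc ∑ i ∈ Finset.univ.erase j, (sg (εp i) + sg (εm i)) * e (i.castSucc.castSucc)
          ≤ (Finset.univ.erase j).card • (2:ℝ) :=
            Finset.sum_le_card_nsmul _ _ _ (fun i _ => hterm i)
        _ = 2 * k := by rw [hcard, nsmul_eq_mul]; ring
    rw [hL3def, hU3def]
    have := hsum ▸ hbound
    linarith
  set c : ℝ := max L1 (max L2 L3) with hcdef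
  have hcL1 : L1 ≤ c := le_max_left _ _
  have hcL2 : L2 ≤ c := le_max_of_le_right (le_max_left _ _)
  have hcL3 : L3 ≤ c := le_max_of_le_right (le_max_right _ _)
  have hcU1 : c ≤ U1 := max_le h11 (max_le h21 h31)
  have hcU2 : c ≤ U2 := max_le h12 (max_le h22 h32)
  have hcU3 : c ≤ U3 := max_le h13 (max_le h23 h33)
  -- reduced system
  set a' : Fin (k+2) → ℝ := fun i => a i.castSucc with ha'def
  set e' : Fin (k+2) → ℝ := fun i => if i = Fin.last (k+1) then c else e i.castSucc with he'def
  have hbox' : ∀ i, |a' i + a' (i+1)| - 1 ≤ e' i ∧ e' i ≤ 1 - |a' i - a' (i+1)| := by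
    intro i
    by_cases hi : i = Fin.last (k+1)
    · subst hi
      rw [ha'def, he'def]
      simp only [if_pos rfl, Fin.last_add_one, Fin.castSucc_zero, hcastK1]
      constructor
      · calc |a vK1 + a 0| - 1 = L1 := by rw [hL1def]
          _ ≤ c := hcL1
      · calc c ≤ U1 := hcU1
          _ = 1 - |a vK1 - a 0| := by rw [hU1def]
    · rw [ha'def, he'def]
      simp only [if_neg hi]
      rw [← castSucc_add_one i hi]
      exact hbox i.castSucc
  have hcyc' : ∀ l : Fin (k+2) → ℝ, (∀ i, l i = 1 ∨ l i = -1) → (∏ i, l i) = -1 →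
      ∑ i, l i * e' i ≤ (k:ℝ) := by
    intro l hsigns hprod
    set ε : Fin (k+1) → Bool := fun i => decide (l i.castSucc = 1) with hεdef
    have hsg : ∀ i : Fin (k+1), sg (ε i) = l i.castSucc := by
      intro i
      by_cases hc : l i.castSucc = 1
      · simp [hεdef, hc, sg]
      · have hm1 := (hsigns i.castSucc).resolve_left hc
        have hd : (decide (l i.castSucc = 1)) = false := decide_eq_false hc
        rw [hεdef]
        simp only [hd, sg, if_false, Bool.false_eq_true]
        rw [hm1]
    have hsplitS : ∑ i, l i * e' i
        = (∑ i : Fin (k+1), l i.castSucc * e' i.castSucc) + l (Fin.last (k+1)) * e' (Fin.last (k+1)) :=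
      Fin.sum_univ_castSucc (f := fun i => l i * e' i)
    have hsplitP : (∏ i, l i) = (∏ i : Fin (k+1), l i.castSucc) * l (Fin.last (k+1)) :=
      Fin.prod_univ_castSucc (f := l)
    have he'c : ∀ i : Fin (k+1), e' i.castSucc = e i.castSucc.castSucc := by
      intro i
      have hne : i.castSucc ≠ Fin.last (k+1) := ne_of_lt (Fin.castSucc_lt_last i)
      rw [he'def]
      simp only [if_neg hne]
    have he'l : e' (Fin.last (k+1)) = c := by rw [he'def]; simp
    have hvale : val ε = ∑ i : Fin (k+1), l i.castSucc * e i.castSucc.castSucc := by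
      rw [hvaldef]
      exact Finset.sum_congr rfl (fun i _ => by rw [hsg i])
    have hPare : Par ε = ∏ i : Fin (k+1), l i.castSucc := by
      rw [hPardef]
      exact Finset.prod_congr rfl (fun i _ => by rw [hsg i])
    rw [hsplitS, he'l, Finset.sum_congr rfl (fun (i : Fin (k+1)) _ => by rw [he'c i])]
    rw [← hvale]
    rcases hsigns (Fin.last (k+1)) with hl1 | hl1
    · have hPm : Par ε = -1 := by
        rw [hPare] at *
        rw [hsplitP, hl1, mul_one] at hprod
        rw [hPare]; exact hprod
      have hmem : ε ∈ Fm := Finset.mem_filter.mpr ⟨Finset.mem_univ _, hPm⟩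
      have hle : val ε ≤ Sm := by rw [hSmdef]; exact Finset.le_sup' val hmem
      have hcu : c ≤ (k:ℝ) - Sm := by
        calc c ≤ U3 := hcU3
          _ = (k:ℝ) - Sm := by rw [hU3def]
      rw [hl1, one_mul]
      linarith
    · have hPp : Par ε = 1 := by
        rw [hsplitP, hl1] at hprod
        rw [hPare]
        linarith
      have hmem : ε ∈ Fp := Finset.mem_filter.mpr ⟨Finset.mem_univ _, hPp⟩
      have hle : val ε ≤ Sp := by rw [hSpdef]; exact Finset.le_sup' val hmem
      have hcl : Sp - (k:ℝ) ≤ c := by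
        calc Sp - (k:ℝ) = L3 := by rw [hL3def]
          _ ≤ c := hcL3
      rw [hl1]
      linarith
  obtain ⟨w', hw0', htot', hmarg', hedge'⟩ := IH a' e' hbox' hcyc'
  -- triangle distribution for the three contexts around the removed vertex
  have hbr1 : |a 0 + a vK1| - 1 ≤ c := by
    rw [show a 0 + a vK1 = a vK1 + a 0 from add_comm _ _]
    calc |a vK1 + a 0| - 1 = L1 := by rw [hL1def]
      _ ≤ c := hcL1
  have hbr2 : c ≤ 1 - |a 0 - a vK1| := by
    rw [abs_sub_comm]
    calc c ≤ U1 := hcU1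
      _ = 1 - |a vK1 - a 0| := by rw [hU1def]
  have habsfg1 := le_abs_self (f + g)
  have habsfg2 := neg_le_abs (f + g)
  have habsfg3 := le_abs_self (f - g)
  have habsfg4 := neg_le_abs (f - g)
  have hL2c : |f + g| - 1 ≤ c := by
    calc |f + g| - 1 = L2 := by rw [hL2def]
      _ ≤ c := hcL2
  have hU2c : c ≤ 1 - |f - g| := by
    calc c ≤ U2 := hcU2
      _ = 1 - |f - g| := by rw [hU2def]
  have hc1 : f + g - c ≤ 1 := by linarith
  have hc2 : f - g + c ≤ 1 := by linarith
  have hc3 : -f + g + c ≤ 1 := by linarith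
  have hc4 : -f - g - c ≤ 1 := by linarith
  obtain ⟨v, hv0, hvtot, hvAC, hvY, hvAB, hvBC⟩ :=
    triangle (a vK1) (a (Fin.last (k+2))) (a 0) f g c
      hboxf.1 hboxf.2 hboxg.1 hboxg.2 hbr1 hbr2 hc1 hc2 hc3 hc4
  -- gluing
  set m : Bool → Bool → ℝ :=
    fun σ τ => (1 + sg σ * a vK1 + sg τ * a 0 + sg σ * sg τ * c) / 4 with hmdef
  have hm0 : ∀ σ τ, 0 ≤ m σ τ := by
    intro σ τ
    exact pos2 (a vK1) (a 0) c (by calc |a vK1 + a 0| - 1 = L1 := by rw [hL1def]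
      _ ≤ c := hcL1) (by calc c ≤ U1 := hcU1
      _ = 1 - |a vK1 - a 0| := by rw [hU1def]) σ τ
  have hvm : ∀ σ τ, (∑ β, v σ β τ) = m σ τ := by
    intro σ τ
    rw [hvAC, hmdef]
  have hv00 : ∀ σ τ, m σ τ = 0 → ∀ b, v σ b τ = 0 := by
    intro σ τ h0 b
    have hs := hvm σ τ
    rw [h0, Fintype.sum_bool] at hs
    cases b
    · linarith [hv0 σ true τ, hv0 σ false τ]
    · linarith [hv0 σ true τ, hv0 σ false τ]
  set I : Bool → Bool → ℝ := fun b b' => if b = b' then 1 else 0 with hIdef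
  have hIsg : ∀ b b', I b b' = (1 + sg b * sg b') / 2 := by
    intro b b'; cases b <;> cases b' <;> norm_num [hIdef, sg]
  have hI0 : ∀ b b', 0 ≤ I b b' := by
    intro b b'; rw [hIdef]; dsimp only; split_ifs <;> norm_num
  have hlastK1 : Fin.last (k+1) + 1 = (0 : Fin (k+2)) := Fin.last_add_one _
  have hWpair : ∀ σ τ,
      (∑ s' : Fin (k+2) → Bool, w' s' * (I (s' (Fin.last (k+1))) σ * I (s' 0) τ)) = m σ τ := by
    intro σ τ
    have hterm : ∀ s' : Fin (k+2) → Bool, w' s' * (I (s' (Fin.last (k+1))) σ * I (s' 0) τ)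
        = (w' s' + (w' s' * sg (s' (Fin.last (k+1)))) * sg σ + (w' s' * sg (s' 0)) * sg τ
           + (w' s' * (sg (s' (Fin.last (k+1))) * sg (s' 0))) * (sg σ * sg τ)) / 4 := by
      intro s'; rw [hIsg, hIsg]; ring
    rw [Finset.sum_congr rfl (fun s' _ => hterm s')]
    rw [← Finset.sum_div, Finset.sum_add_distrib, Finset.sum_add_distrib, Finset.sum_add_distrib,
        ← Finset.sum_mul, ← Finset.sum_mul, ← Finset.sum_mul]
    have h1 : (∑ s' : Fin (k+2) → Bool, w' s' * sg (s' (Fin.last (k+1)))) = a vK1 := by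
      rw [hmarg' (Fin.last (k+1)), ha'def]
      simp only
      rw [hcastK1]
    have h2 : (∑ s' : Fin (k+2) → Bool, w' s' * sg (s' 0)) = a 0 := by
      rw [hmarg' 0, ha'def]
      simp only
      rw [Fin.castSucc_zero]
    have h3 : (∑ s' : Fin (k+2) → Bool, w' s' * (sg (s' (Fin.last (k+1))) * sg (s' 0))) = c := by
      have hE := hedge' (Fin.last (k+1))
      rw [hlastK1] at hE
      rw [hE, he'def]
      simp
    rw [htot', h1, h2, h3, hmdef]
    ring
  have hWzero : ∀ s' : Fin (k+2) → Bool, m (s' (Fin.last (k+1))) (s' 0) = 0 → w' s' = 0 := by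
    intro s' h0
    have hsum := hWpair (s' (Fin.last (k+1))) (s' 0)
    rw [h0] at hsum
    have hnn : ∀ t ∈ (Finset.univ : Finset (Fin (k+2) → Bool)),
        (0:ℝ) ≤ w' t * (I (t (Fin.last (k+1))) (s' (Fin.last (k+1))) * I (t 0) (s' 0)) :=
      fun t _ => mul_nonneg (hw0' t) (mul_nonneg (hI0 _ _) (hI0 _ _))
    have hz := (Finset.sum_eq_zero_iff_of_nonneg hnn).mp hsum s' (Finset.mem_univ s')
    rw [hIdef] at hz
    simpa using hz
  have hGROUP : ∀ h : Bool → Bool → ℝ,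
      (∑ s' : Fin (k+2) → Bool, w' s' * h (s' (Fin.last (k+1))) (s' 0))
        = ∑ σ, ∑ τ, m σ τ * h σ τ := by
    intro h
    have hterm : ∀ s' : Fin (k+2) → Bool, w' s' * h (s' (Fin.last (k+1))) (s' 0)
        = ∑ p : Bool × Bool, w' s' * (I (s' (Fin.last (k+1))) p.1 * I (s' 0) p.2) * h p.1 p.2 := by
      intro s'
      rw [Fintype.sum_prod_type]
      cases hb : s' (Fin.last (k+1)) <;> cases hb0 : s' 0 <;>
        simp [Fintype.sum_bool, hIdef]
    rw [Finset.sum_congr rfl (fun s' _ => hterm s')]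
    rw [Finset.sum_comm]
    rw [Fintype.sum_prod_type]
    refine Finset.sum_congr rfl (fun σ _ => Finset.sum_congr rfl (fun τ _ => ?_))
    rw [← Finset.sum_mul, hWpair]
  -- the equivalence between (Fin (k+3) → Bool) and (Fin (k+2) → Bool) × Bool
  set E : ((Fin (k+2) → Bool) × Bool) ≃ (Fin (k+3) → Bool) :=
    { toFun := fun p => Fin.snoc p.1 p.2
      invFun := fun s => (fun j => s j.castSucc, s (Fin.last (k+2)))
      left_inv := fun p => by
        have h1 : (fun j : Fin (k+2) => (Fin.snoc p.1 p.2 : Fin (k+3) → Bool) j.castSucc) = p.1 := by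
          funext j; exact Fin.snoc_castSucc _ _ _
        have h2 : (Fin.snoc p.1 p.2 : Fin (k+3) → Bool) (Fin.last (k+2)) = p.2 :=
          Fin.snoc_last _ _
        rw [Prod.ext_iff]
        exact ⟨h1, h2⟩
      right_inv := fun s => Fin.snoc_init_self s } with hEdef
  have hsum3 : ∀ F : (Fin (k+3) → Bool) → ℝ,
      (∑ s, F s) = ∑ s' : Fin (k+2) → Bool, ∑ b, F (Fin.snoc s' b) := by
    intro F
    rw [← E.sum_comp F, Fintype.sum_prod_type]
    rfl
  set w : (Fin (k+3) → Bool) → ℝ := fun s =>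
    w' (fun j => s j.castSucc) * v (s vK1) (s (Fin.last (k+2))) (s 0)
      / m (s vK1) (s 0) with hwdef
  have hsnocK1 : ∀ (s' : Fin (k+2) → Bool) (b : Bool),
      (Fin.snoc s' b : Fin (k+3) → Bool) vK1 = s' (Fin.last (k+1)) := by
    intro s' b
    rw [← hcastK1]
    exact Fin.snoc_castSucc _ _ _
  have hsnoc0 : ∀ (s' : Fin (k+2) → Bool) (b : Bool),
      (Fin.snoc s' b : Fin (k+3) → Bool) 0 = s' 0 := by
    intro s' b
    have h := Fin.snoc_castSucc (α := fun _ : Fin (k+3) => Bool) b s' 0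
    rw [Fin.castSucc_zero] at h
    exact h
  have hsnocL : ∀ (s' : Fin (k+2) → Bool) (b : Bool),
      (Fin.snoc s' b : Fin (k+3) → Bool) (Fin.last (k+2)) = b :=
    fun s' b => Fin.snoc_last _ _
  have hsnocrestr : ∀ (s' : Fin (k+2) → Bool) (b : Bool),
      (fun j : Fin (k+2) => (Fin.snoc s' b : Fin (k+3) → Bool) j.castSucc) = s' := by
    intro s' b; funext j; exact Fin.snoc_castSucc _ _ _
  have habsorb : ∀ (s' : Fin (k+2) → Bool) (X : ℝ),
      w' s' * X / m (s' (Fin.last (k+1))) (s' 0) * m (s' (Fin.last (k+1))) (s' 0) = w' s' * X := by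
    intro s' X
    by_cases h0 : m (s' (Fin.last (k+1))) (s' 0) = 0
    · rw [h0, mul_zero, hWzero s' h0, zero_mul]
    · rw [div_mul_cancel₀ _ h0]
  have RED1 : ∀ G : (Fin (k+2) → Bool) → ℝ,
      (∑ s, w s * G (fun j => s j.castSucc)) = ∑ s' : Fin (k+2) → Bool, w' s' * G s' := by
    intro G
    rw [hsum3 (fun s => w s * G (fun j => s j.castSucc))]
    refine Finset.sum_congr rfl (fun s' _ => ?_)
    have hterm : ∀ b, w (Fin.snoc s' b) * G (fun j => (Fin.snoc s' b : Fin (k+3) → Bool) j.castSucc)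
        = (w' s' * G s' / m (s' (Fin.last (k+1))) (s' 0)) * v (s' (Fin.last (k+1))) b (s' 0) := by
      intro b
      simp only [hwdef, hsnocrestr, hsnocK1, hsnoc0, hsnocL]
      ring
    rw [Finset.sum_congr rfl (fun b _ => hterm b)]
    rw [← Finset.mul_sum, hvm]
    exact habsorb s' (G s')
  have RED2 : ∀ G : Bool → Bool → Bool → ℝ,
      (∑ s, w s * G (s vK1) (s (Fin.last (k+2))) (s 0))
        = ∑ σ, ∑ τ, ∑ b, v σ b τ * G σ b τ := by
    intro G
    rw [hsum3 (fun s => w s * G (s vK1) (s (Fin.last (k+2))) (s 0))]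
    have hterm : ∀ (s' : Fin (k+2) → Bool) (b : Bool),
        w (Fin.snoc s' b) * G ((Fin.snoc s' b : Fin (k+3) → Bool) vK1)
          ((Fin.snoc s' b : Fin (k+3) → Bool) (Fin.last (k+2)))
          ((Fin.snoc s' b : Fin (k+3) → Bool) 0)
        = w' s' * ((v (s' (Fin.last (k+1))) b (s' 0) * G (s' (Fin.last (k+1))) b (s' 0))
            / m (s' (Fin.last (k+1))) (s' 0)) := by
      intro s' b
      simp only [hwdef, hsnocrestr, hsnocK1, hsnoc0, hsnocL]
      ring
    rw [Finset.sum_congr rfl (fun s' _ => Finset.sum_congr rfl (fun b _ => hterm s' b))]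
    have hinner : ∀ s' : Fin (k+2) → Bool,
        (∑ b, w' s' * ((v (s' (Fin.last (k+1))) b (s' 0) * G (s' (Fin.last (k+1))) b (s' 0))
            / m (s' (Fin.last (k+1))) (s' 0)))
        = w' s' * ((∑ b, v (s' (Fin.last (k+1))) b (s' 0) * G (s' (Fin.last (k+1))) b (s' 0))
            / m (s' (Fin.last (k+1))) (s' 0)) := by
      intro s'
      rw [← Finset.mul_sum, ← Finset.sum_div]
    rw [Finset.sum_congr rfl (fun s' _ => hinner s')]
    rw [hGROUP (fun σ τ => (∑ b, v σ b τ * G σ b τ) / m σ τ)]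
    refine Finset.sum_congr rfl (fun σ _ => Finset.sum_congr rfl (fun τ _ => ?_))
    by_cases h0 : m σ τ = 0
    · rw [h0, zero_mul]
      symm
      refine Finset.sum_eq_zero (fun b _ => ?_)
      rw [hv00 σ τ h0 b, zero_mul]
    · rw [mul_comm, div_mul_cancel₀ _ h0]
  refine ⟨w, ?_, ?_, ?_, ?_⟩
  · intro s
    rw [hwdef]
    exact div_nonneg (mul_nonneg (hw0' _) (hv0 _ _ _)) (hm0 _ _)
  · have h2 : (∑ s, w s * (1:ℝ)) = ∑ s' : Fin (k+2) → Bool, w' s' * (1:ℝ) :=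
      RED1 (fun _ => (1:ℝ))
    simp only [mul_one] at h2
    rw [h2, htot']
  · intro i
    by_cases hi : i = Fin.last (k+2)
    · subst hi
      have h2 : (∑ s, w s * sg (s (Fin.last (k+2))))
          = ∑ σ, ∑ τ, ∑ b, v σ b τ * sg b := RED2 (fun _ b _ => sg b)
      rw [h2, ← hvY]
      exact Finset.sum_congr rfl (fun σ _ => Finset.sum_comm)
    · obtain ⟨j, rfl⟩ := Fin.exists_castSucc_eq.mpr hi
      have h2 : (∑ s, w s * sg (s j.castSucc)) = ∑ s' : Fin (k+2) → Bool, w' s' * sg (s' j) :=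
        RED1 (fun s' => sg (s' j))
      rw [h2, hmarg' j, ha'def]
  · intro i
    by_cases hiL : i = Fin.last (k+2)
    · subst hiL
      rw [hlastsucc]
      have h2 : (∑ s, w s * (sg (s (Fin.last (k+2))) * sg (s 0)))
          = ∑ σ, ∑ τ, ∑ b, v σ b τ * (sg b * sg τ) := RED2 (fun σ b τ => sg b * sg τ)
      rw [h2, ← hgdef, ← hvBC]
      exact Finset.sum_congr rfl (fun σ _ => Finset.sum_comm)
    · obtain ⟨j, rfl⟩ := Fin.exists_castSucc_eq.mpr hiL
      by_cases hjL : j = Fin.last (k+1)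
      · subst hjL
        rw [hcastK1, hK1succ]
        have h2 : (∑ s, w s * (sg (s vK1) * sg (s (Fin.last (k+2)))))
            = ∑ σ, ∑ τ, ∑ b, v σ b τ * (sg σ * sg b) := RED2 (fun σ b τ => sg σ * sg b)
        rw [h2, ← hfdef, ← hvAB]
        exact Finset.sum_congr rfl (fun σ _ => Finset.sum_comm)
      · rw [castSucc_add_one j hjL]
        have h2 : (∑ s, w s * (sg (s j.castSucc) * sg (s (j+1).castSucc)))
            = ∑ s' : Fin (k+2) → Bool, w' s' * (sg (s' j) * sg (s' (j+1))) :=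
          RED1 (fun s' => sg (s' j) * sg (s' (j+1)))
        rw [h2, hedge' j, he'def]
        simp only [if_neg hjL]

lemma key2 (a e : Fin 2 → ℝ)
    (hbox : ∀ i, |a i + a (i+1)| - 1 ≤ e i ∧ e i ≤ 1 - |a i - a (i+1)|)
    (hcyc : ∀ l : Fin 2 → ℝ, (∀ i, l i = 1 ∨ l i = -1) → (∏ i, l i) = -1 →
      ∑ i, l i * e i ≤ (0:ℝ)) :
    ∃ w : (Fin 2 → Bool) → ℝ, (∀ s, 0 ≤ w s) ∧ (∑ s, w s) = 1 ∧
      (∀ i, (∑ s, w s * sg (s i)) = a i) ∧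
      (∀ i, (∑ s, w s * (sg (s i) * sg (s (i+1)))) = e i) := by
  have hee : e 1 = e 0 := by
    have h1 := hcyc ![1, -1] (by intro i; fin_cases i <;> simp) (by simp [Fin.prod_univ_two])
    have h2 := hcyc ![-1, 1] (by intro i; fin_cases i <;> simp) (by simp [Fin.prod_univ_two])
    simp [Fin.sum_univ_two] at h1 h2
    linarith
  refine ⟨fun s => (1 + sg (s 0) * a 0 + sg (s 1) * a 1 + sg (s 0) * sg (s 1) * e 0) / 4,
    ?_, ?_, ?_, ?_⟩
  · intro s; exact pos2 _ _ _ (hbox 0).1 (hbox 0).2 _ _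
  · rw [← ((piFinTwoEquiv fun _ => Bool).symm.sum_comp
      (fun s => (1 + sg (s 0) * a 0 + sg (s 1) * a 1 + sg (s 0) * sg (s 1) * e 0) / 4))]
    simp [Fintype.sum_prod_type, Fintype.sum_bool, sg]
    ring
  · intro i
    rw [← ((piFinTwoEquiv fun _ => Bool).symm.sum_comp _)]
    fin_cases i <;>
      simp [Fintype.sum_prod_type, Fintype.sum_bool, sg] <;> ring
  · intro i
    rw [← ((piFinTwoEquiv fun _ => Bool).symm.sum_comp _)]
    fin_cases i <;>
      simp [Fintype.sum_prod_type, Fintype.sum_bool, sg, hee, show (1:Fin 2)+1 = 0 by decide] <;>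
      ring

lemma key : ∀ (k : ℕ) (a e : Fin (k+2) → ℝ),
    (∀ i, |a i + a (i+1)| - 1 ≤ e i ∧ e i ≤ 1 - |a i - a (i+1)|) →
    (∀ l : Fin (k+2) → ℝ, (∀ i, l i = 1 ∨ l i = -1) → (∏ i, l i) = -1 →
      ∑ i, l i * e i ≤ (k:ℝ)) →
    ∃ w : (Fin (k+2) → Bool) → ℝ, (∀ s, 0 ≤ w s) ∧ (∑ s, w s) = 1 ∧
      (∀ i, (∑ s, w s * sg (s i)) = a i) ∧
      (∀ i, (∑ s, w s * (sg (s i) * sg (s (i+1)))) = e i) := by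
  intro k
  induction k with
  | zero =>
    intro a e hb hc
    exact key2 a e hb (fun l h1 h2 => by simpa using hc l h1 h2)
  | succ k IH =>
    intro a e hb hc
    exact keystep k IH a e hb (fun l h1 h2 => by
      have := hc l h1 h2
      push_cast at this
      linarith)

lemma sum_pm_le {n : ℕ} (t : Fin n → ℝ) (h : ∀ i, t i = 1 ∨ t i = -1)
    (hp : (∏ i, t i) = -1) : ∑ i, t i ≤ (n:ℝ) - 2 := by
  have hex : ∃ j, t j = -1 := by
    by_contra hco
    push_neg at hco
    have : ∀ i, t i = 1 := fun i => (h i).resolve_right (hco i)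
    rw [Finset.prod_congr rfl (fun i _ => this i)] at hp
    norm_num at hp
  obtain ⟨j, hj⟩ := hex
  rw [← Finset.sum_erase_add _ _ (Finset.mem_univ j), hj]
  have hbd : ∑ i ∈ Finset.univ.erase j, t i ≤ (Finset.univ.erase j).card • (1:ℝ) :=
    Finset.sum_le_card_nsmul _ _ _ (fun i _ => by rcases h i with h' | h' <;> rw [h'] <;> norm_num)
  have hcard : (Finset.univ.erase j).card = n - 1 := by
    rw [Finset.card_erase_of_mem (Finset.mem_univ j)]
    simp
  rw [hcard, nsmul_eq_mul, mul_one] at hbd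
  have hn1 : 1 ≤ n := Nat.one_le_iff_ne_zero.mpr (fun h0 => by subst h0; exact j.elim0)
  have : ((n - 1 : ℕ) : ℝ) = (n:ℝ) - 1 := by
    push_cast [Nat.cast_sub hn1]
    ring
  rw [this] at hbd
  linarith

end AuxNC

/-- A consistently connected cyclic system of rank n with marginal expectations
a i (content i) and bunch product expectations e i is noncontextual (a joint
distribution of ±1 variables T₁,…,Tₙ reproduces all bunches) iff s₁(e) ≤ n - 2
and e lies in the box ∏ᵢ [|aᵢ + a_{i⊕1}| - 1, 1 - |aᵢ - a_{i⊕1}|]. -/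
theorem stmt11 (n : ℕ) [NeZero n] (hn : 2 ≤ n) (a e : Fin n → ℝ)
    (ha : ∀ i, |a i| ≤ 1) (he : ∀ i, |e i| ≤ 1) :
    (∃ w : (Fin n → Bool) → ℝ, (∀ s, 0 ≤ w s) ∧ (∑ s, w s) = 1 ∧
      (∀ i, (∑ s, w s * (if s i then (1:ℝ) else -1)) = a i) ∧
      (∀ i, (∑ s, w s * ((if s i then (1:ℝ) else -1) *
        (if s (i + 1) then (1:ℝ) else -1))) = e i))
    ↔ (s1 n e ≤ (n : ℝ) - 2 ∧
        ∀ i, |a i + a (i + 1)| - 1 ≤ e i ∧ e i ≤ 1 - |a i - a (i + 1)|) := by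
  constructor
  · rintro ⟨w, hw0, htot, hmargIf, hedgeIf⟩
    have hmarg : ∀ i, (∑ s, w s * sg (s i)) = a i := hmargIf
    have hedge : ∀ i, (∑ s, w s * (sg (s i) * sg (s (i+1)))) = e i := hedgeIf
    constructor
    · -- s₁(e) ≤ n - 2
      rw [s1]
      refine csSup_le ⟨∑ i, (fun i : Fin n => if i = 0 then (-1:ℝ) else 1) i * e i,
        ⟨fun i : Fin n => if i = 0 then (-1:ℝ) else 1, ?_, ?_, rfl⟩⟩ ?_
      · intro i; by_cases hi : i = 0 <;> simp [hi]
      · rw [Finset.prod_eq_single (0 : Fin n) (fun b _ hb => if_neg hb) (by simp)]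
        simp
      · rintro x ⟨l, hsg, hprod, rfl⟩
        have hswap : ∑ i, l i * e i
            = ∑ s, w s * (∑ i, l i * (sg (s i) * sg (s (i+1)))) := by
          have h1 : ∀ i, l i * e i = ∑ s, l i * (w s * (sg (s i) * sg (s (i+1)))) := by
            intro i; rw [← Finset.mul_sum, hedge i]
          rw [Finset.sum_congr rfl (fun i _ => h1 i), Finset.sum_comm]
          refine Finset.sum_congr rfl (fun s _ => ?_)
          rw [Finset.mul_sum]
          exact Finset.sum_congr rfl (fun i _ => by ring)
        rw [hswap]
        have hinner : ∀ s : Fin n → Bool,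
            (∑ i, l i * (sg (s i) * sg (s (i+1)))) ≤ (n:ℝ) - 2 := by
          intro s
          refine sum_pm_le _ (fun i => ?_) ?_
          · rcases hsg i with h' | h' <;> rcases sg_cases (s i) with h1 | h1 <;>
              rcases sg_cases (s (i+1)) with h2 | h2 <;> rw [h', h1, h2] <;> norm_num
          · have hdistr : (∏ i, l i * (sg (s i) * sg (s (i+1))))
                = (∏ i, l i) * ((∏ i, sg (s i)) * (∏ i, sg (s (i+1)))) := by
              rw [← Finset.prod_mul_distrib, ← Finset.prod_mul_distrib]
            have hshift : (∏ i, sg (s (i+1))) = ∏ i, sg (s i) :=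
              Fintype.prod_equiv (Equiv.addRight (1 : Fin n))
                (fun i => sg (s (i+1))) (fun i => sg (s i)) (fun i => rfl)
            have hsq : (∏ i, sg (s i)) * (∏ i, sg (s i)) = 1 := by
              rw [← Finset.prod_mul_distrib]
              exact Finset.prod_eq_one (fun i _ => sg_mul_self (s i))
            rw [hdistr, hshift, hsq, hprod]
            norm_num
        calc ∑ s, w s * (∑ i, l i * (sg (s i) * sg (s (i+1))))
            ≤ ∑ s : Fin n → Bool, w s * ((n:ℝ) - 2) :=
              Finset.sum_le_sum (fun s _ =>
                mul_le_mul_of_nonneg_left (hinner s) (hw0 s))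
          _ = (n:ℝ) - 2 := by rw [← Finset.sum_mul, htot, one_mul]
    · -- box
      intro i
      have hq : ∀ q : Bool → Bool → ℝ, (∀ b b', 0 ≤ q b b') →
          0 ≤ ∑ s, w s * q (s i) (s (i+1)) :=
        fun q hq0 => Finset.sum_nonneg (fun s _ => mul_nonneg (hw0 s) (hq0 _ _))
      have expand : ∀ (c1 c2 c3 c4 : ℝ),
          (∑ s, w s * (c1 * (sg (s i) * sg (s (i+1))) + c2 * sg (s i) + c3 * sg (s (i+1)) + c4))
          = c1 * e i + c2 * a i + c3 * a (i+1) + c4 := by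
        intro c1 c2 c3 c4
        have h1 : ∀ s : Fin n → Bool,
            w s * (c1 * (sg (s i) * sg (s (i+1))) + c2 * sg (s i) + c3 * sg (s (i+1)) + c4)
            = c1 * (w s * (sg (s i) * sg (s (i+1)))) + c2 * (w s * sg (s i))
              + c3 * (w s * sg (s (i+1))) + c4 * w s := fun s => by ring
        rw [Finset.sum_congr rfl (fun s _ => h1 s)]
        rw [Finset.sum_add_distrib, Finset.sum_add_distrib, Finset.sum_add_distrib,
          ← Finset.mul_sum, ← Finset.mul_sum, ← Finset.mul_sum, ← Finset.mul_sum]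
        rw [hedge i, hmarg i, hmarg (i+1), htot, mul_one]
      have hineq1 : 0 ≤ e i - a i - a (i+1) + 1 := by
        have h : 0 ≤ ∑ s, w s * ((sg (s i) - 1) * (sg (s (i+1)) - 1)) :=
          hq (fun b b' => (sg b - 1) * (sg b' - 1))
            (fun b b' => by cases b <;> cases b' <;> norm_num [sg])
        have h2 := expand 1 (-1) (-1) 1
        have h3 : ∀ s : Fin n → Bool, (sg (s i) - 1) * (sg (s (i+1)) - 1)
            = 1 * (sg (s i) * sg (s (i+1))) + (-1) * sg (s i) + (-1) * sg (s (i+1)) + 1 :=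
          fun s => by ring
        rw [Finset.sum_congr rfl (fun s _ => by rw [h3 s])] at h
        rw [h2] at h
        linarith
      have hineq2 : 0 ≤ e i + a i + a (i+1) + 1 := by
        have h : 0 ≤ ∑ s, w s * ((sg (s i) + 1) * (sg (s (i+1)) + 1)) :=
          hq (fun b b' => (sg b + 1) * (sg b' + 1))
            (fun b b' => by cases b <;> cases b' <;> norm_num [sg])
        have h2 := expand 1 1 1 1
        have h3 : ∀ s : Fin n → Bool, (sg (s i) + 1) * (sg (s (i+1)) + 1)
            = 1 * (sg (s i) * sg (s (i+1))) + 1 * sg (s i) + 1 * sg (s (i+1)) + 1 :=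
          fun s => by ring
        rw [Finset.sum_congr rfl (fun s _ => by rw [h3 s])] at h
        rw [h2] at h
        linarith
      have hineq3 : 0 ≤ 1 - a i + a (i+1) - e i := by
        have h : 0 ≤ ∑ s, w s * ((1 - sg (s i)) * (sg (s (i+1)) + 1)) :=
          hq (fun b b' => (1 - sg b) * (sg b' + 1))
            (fun b b' => by cases b <;> cases b' <;> norm_num [sg])
        have h2 := expand (-1) (-1) 1 1
        have h3 : ∀ s : Fin n → Bool, (1 - sg (s i)) * (sg (s (i+1)) + 1)
            = (-1) * (sg (s i) * sg (s (i+1))) + (-1) * sg (s i) + 1 * sg (s (i+1)) + 1 :=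
          fun s => by ring
        rw [Finset.sum_congr rfl (fun s _ => by rw [h3 s])] at h
        rw [h2] at h
        linarith
      have hineq4 : 0 ≤ 1 + a i - a (i+1) - e i := by
        have h : 0 ≤ ∑ s, w s * ((sg (s i) + 1) * (1 - sg (s (i+1)))) :=
          hq (fun b b' => (sg b + 1) * (1 - sg b'))
            (fun b b' => by cases b <;> cases b' <;> norm_num [sg])
        have h2 := expand (-1) 1 (-1) 1
        have h3 : ∀ s : Fin n → Bool, (sg (s i) + 1) * (1 - sg (s (i+1)))
            = (-1) * (sg (s i) * sg (s (i+1))) + 1 * sg (s i) + (-1) * sg (s (i+1)) + 1 :=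
          fun s => by ring
        rw [Finset.sum_congr rfl (fun s _ => by rw [h3 s])] at h
        rw [h2] at h
        linarith
      constructor
      · have : |a i + a (i+1)| ≤ e i + 1 := abs_le.mpr ⟨by linarith, by linarith⟩
        linarith
      · have : |a i - a (i+1)| ≤ 1 - e i := abs_le.mpr ⟨by linarith, by linarith⟩
        linarith
  · rintro ⟨hs1, hbox⟩
    have hbdd : BddAbove {s : ℝ | ∃ l : Fin n → ℝ, (∀ i, l i = 1 ∨ l i = -1) ∧
        (∏ i, l i) = -1 ∧ s = ∑ i, l i * e i} := by
      refine ⟨∑ i, |e i|, ?_⟩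
      rintro x ⟨l, hsg, _, rfl⟩
      calc ∑ i, l i * e i ≤ ∑ i, |l i * e i| :=
          Finset.sum_le_sum (fun i _ => le_abs_self _)
        _ = ∑ i, |e i| := Finset.sum_congr rfl (fun i _ => by
            rw [abs_mul]
            rcases hsg i with h | h <;> rw [h] <;> norm_num)
    have hcyc : ∀ l : Fin n → ℝ, (∀ i, l i = 1 ∨ l i = -1) → (∏ i, l i) = -1 →
        ∑ i, l i * e i ≤ (n:ℝ) - 2 := by
      intro l h1 h2
      refine le_trans (le_csSup hbdd ⟨l, h1, h2, rfl⟩) ?_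
      rw [s1] at hs1
      exact hs1
    obtain ⟨k, rfl⟩ : ∃ k, n = k + 2 := ⟨n - 2, by omega⟩
    obtain ⟨w, hw0, htot, hmarg, hedge⟩ := key k a e hbox (fun l h1 h2 => by
      have := hcyc l h1 h2
      push_cast at this
      linarith)
    exact ⟨w, hw0, htot, hmarg, hedge⟩
end

section
/- Let m systems of random variables R₁,…,R_m have pairwise disjoint sets of contexts and contents, and let R be their disjoint union. If contextual fraction CNTF of a system is defined as 1 minus the maximal total mass of a subprobability measure h ≥ 0 on the deterministic global assignments satisfying M·h ≤ p (where p is the vector of all bunch probabilities), then CNTF(R) = max_{k=1,…,m} CNTF(R_k). -/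
open Finset

/-- Sum of a product over a dependent product type factors. -/
private lemma sum_prod_pi {m : ℕ} {G : Fin m → Type} [∀ k, Fintype (G k)]
    [∀ k, DecidableEq (G k)] (f : ∀ k, G k → ℝ) :
    (∑ g : ∀ k, G k, ∏ k, f k (g k)) = ∏ k, ∑ x, f k x := by
  rw [Finset.prod_univ_sum (fun _ => Finset.univ) f, Fintype.piFinset_univ]

/-- Sum over the assignments whose `k`-th coordinate lies in `E` factors. -/
private lemma filter_sum_prod {m : ℕ} {G : Fin m → Type} [∀ k, Fintype (G k)]
    [∀ k, DecidableEq (G k)] (f : ∀ k, G k → ℝ) (k : Fin m) (E : Finset (G k)) :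
    (∑ g ∈ Finset.univ.filter (fun g : ∀ k, G k => g k ∈ E), ∏ j, f j (g j))
      = (∑ x ∈ E, f k x) * ∏ j ∈ Finset.univ.erase k, ∑ x, f j x := by
  classical
  set f' : ∀ j, G j → ℝ :=
    Function.update f k (fun x => if x ∈ E then f k x else 0) with hf'
  have h1 : ∀ g : ∀ j, G j,
      (if g k ∈ E then ∏ j, f j (g j) else 0) = ∏ j, f' j (g j) := by
    intro g
    by_cases hg : g k ∈ E
    · simp only [hg, if_true]
      refine Finset.prod_congr rfl fun j _ => ?_
      by_cases hj : j = k
      · subst hj; simp [hf', hg]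
      · simp [hf', Function.update_of_ne hj]
    · simp only [hg, if_false]
      refine (Finset.prod_eq_zero (Finset.mem_univ k) ?_).symm
      simp [hf', hg]
  calc (∑ g ∈ Finset.univ.filter (fun g : ∀ k, G k => g k ∈ E), ∏ j, f j (g j))
      = ∑ g : ∀ j, G j, if g k ∈ E then ∏ j, f j (g j) else 0 := by
        rw [Finset.sum_filter]
    _ = ∑ g : ∀ j, G j, ∏ j, f' j (g j) := by
        exact Finset.sum_congr rfl fun g _ => h1 g
    _ = ∏ j, ∑ x, f' j x := sum_prod_pi f'
    _ = (∑ x, f' k x) * ∏ j ∈ Finset.univ.erase k, ∑ x, f' j x :=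
        (Finset.mul_prod_erase _ _ (Finset.mem_univ k)).symm
    _ = (∑ x ∈ E, f k x) * ∏ j ∈ Finset.univ.erase k, ∑ x, f j x := by
        congr 1
        · simp [hf', Finset.sum_ite_mem]
        · refine Finset.prod_congr rfl fun j hj => ?_
          have hj' : j ≠ k := (Finset.mem_erase.mp hj).1
          simp [hf', Function.update_of_ne hj']

/-- For the disjoint union of m systems, the contextual fraction (1 minus the
maximal total mass of a subprobability measure h ≥ 0 on global assignments
with M·h ≤ p) equals the maximum of the contextual fractions of the components:
the linear program decomposes as a product over the components. -/
theorem stmt14 (m : ℕ) (hm : 1 ≤ m) (G : Fin m → Type) [∀ k, Fintype (G k)]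
    [∀ k, DecidableEq (G k)]
    (ι : Fin m → Type) [∀ k, Fintype (ι k)]
    (E : ∀ k, ι k → Finset (G k)) (p : ∀ k, ι k → ℝ) (hp : ∀ k i, 0 ≤ p k i) :
    1 - sSup {t : ℝ | ∃ h : (∀ k, G k) → ℝ, (∀ g, 0 ≤ h g) ∧ (∑ g, h g) ≤ 1 ∧
        (∀ k i, (∑ g ∈ Finset.univ.filter (fun g : ∀ k, G k => g k ∈ E k i), h g)
          ≤ p k i) ∧
        t = ∑ g, h g}
    = sSup (Set.range fun k : Fin m =>
        1 - sSup {t : ℝ | ∃ h : G k → ℝ, (∀ g, 0 ≤ h g) ∧ (∑ g, h g) ≤ 1 ∧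
          (∀ i, (∑ g ∈ E k i, h g) ≤ p k i) ∧ t = ∑ g, h g}) := by
  classical
  have hmne : Nonempty (Fin m) := ⟨⟨0, hm⟩⟩
  set S : Set ℝ := {t : ℝ | ∃ h : (∀ k, G k) → ℝ, (∀ g, 0 ≤ h g) ∧ (∑ g, h g) ≤ 1 ∧
        (∀ k i, (∑ g ∈ Finset.univ.filter (fun g : ∀ k, G k => g k ∈ E k i), h g)
          ≤ p k i) ∧ t = ∑ g, h g} with hS
  set Sk : Fin m → Set ℝ := fun k =>
    {t : ℝ | ∃ h : G k → ℝ, (∀ g, 0 ≤ h g) ∧ (∑ g, h g) ≤ 1 ∧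
      (∀ i, (∑ g ∈ E k i, h g) ≤ p k i) ∧ t = ∑ g, h g} with hSk
  set a : Fin m → ℝ := fun k => sSup (Sk k) with ha
  -- basic facts
  have hS0 : (0 : ℝ) ∈ S := by
    refine ⟨fun _ => 0, fun _ => le_refl 0, by simp, fun k i => by simp [hp k i], by simp⟩
  have hSk0 : ∀ k, (0 : ℝ) ∈ Sk k := by
    intro k
    exact ⟨fun _ => 0, fun _ => le_refl 0, by simp, fun i => by simp [hp k i], by simp⟩
  have hSub : ∀ t ∈ S, t ≤ 1 := by
    rintro t ⟨h, _, h1, _, rfl⟩; exact h1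
  have hSkub : ∀ k, ∀ t ∈ Sk k, t ≤ 1 := by
    rintro k t ⟨h, _, h1, _, rfl⟩; exact h1
  have hSbdd : BddAbove S := ⟨1, hSub⟩
  have hSkbdd : ∀ k, BddAbove (Sk k) := fun k => ⟨1, hSkub k⟩
  -- marginalization: S ⊆ Sk k
  have marg : ∀ k, S ⊆ Sk k := by
    rintro k t ⟨h, hnn, h1, hc, rfl⟩
    refine ⟨fun x => ∑ g ∈ Finset.univ.filter (fun g : ∀ k, G k => g k = x), h g,
      fun x => Finset.sum_nonneg fun g _ => hnn g, ?_, ?_, ?_⟩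
    · rw [Finset.sum_fiberwise_of_maps_to (fun g _ => Finset.mem_univ (g k))]
      exact h1
    · intro i
      rw [Finset.sum_fiberwise_eq_sum_filter]
      exact hc k i
    · rw [Finset.sum_fiberwise_of_maps_to (fun g _ => Finset.mem_univ (g k))]
  have hAle : ∀ k, sSup S ≤ a k := fun k =>
    csSup_le_csSup (hSkbdd k) ⟨0, hS0⟩ (marg k)
  -- the minimum of component optima
  have hne : (Finset.univ : Finset (Fin m)).Nonempty := Finset.univ_nonempty
  set c : ℝ := Finset.univ.inf' hne a with hc
  have hcle : ∀ k, c ≤ a k := fun k => Finset.inf'_le a (Finset.mem_univ k)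
  -- `c ≤ sSup S` : product construction
  have key : c ≤ sSup S := by
    refine le_of_forall_sub_le fun ε hε => ?_
    by_cases hcε : c - ε ≤ 0
    · exact hcε.trans (le_csSup hSbdd hS0)
    push_neg at hcε
    set τ : ℝ := c - ε with hτ
    have hτpos : 0 < τ := hcε
    have hτlt : ∀ k, τ < a k := fun k =>
      lt_of_lt_of_le (by simp [hτ]; linarith [hcle k]) (le_refl _) |>.trans_le (hcle k)
    have hex : ∀ k, ∃ h : G k → ℝ, (∀ g, 0 ≤ h g) ∧ (∑ g, h g) ≤ 1 ∧
        (∀ i, (∑ g ∈ E k i, h g) ≤ p k i) ∧ τ < ∑ g, h g := by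
      intro k
      obtain ⟨t, ht, hlt⟩ := exists_lt_of_lt_csSup ⟨0, hSk0 k⟩ (hτlt k)
      obtain ⟨h, hnn, h1, hci, rfl⟩ := ht
      exact ⟨h, hnn, h1, hci, hlt⟩
    choose h hnn hle1 hci hmass using hex
    set t : Fin m → ℝ := fun k => ∑ g, h k g with ht
    have htpos : ∀ k, 0 < t k := fun k => hτpos.trans (hmass k)
    set q : ∀ k, G k → ℝ := fun k x => h k x / t k with hq
    have hqnn : ∀ k x, 0 ≤ q k x := fun k x => div_nonneg (hnn k x) (htpos k).le
    have hqsum : ∀ k, ∑ x, q k x = 1 := by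
      intro k
      rw [hq]
      simp only
      rw [← Finset.sum_div, div_self (htpos k).ne']
    set H : (∀ k, G k) → ℝ := fun g => τ * ∏ j, q j (g j) with hH
    have hmem : τ ∈ S := by
      refine ⟨H, fun g => mul_nonneg hτpos.le
        (Finset.prod_nonneg fun j _ => hqnn j (g j)), ?_, ?_, ?_⟩
      · have : ∑ g, H g = τ := by
          rw [hH]; simp only
          rw [← Finset.mul_sum, sum_prod_pi q]
          simp [hqsum]
        rw [this]
        have := hcle ⟨0, hm⟩
        have := hSkub ⟨0, hm⟩ -- unused
        have ha1 : a ⟨0, hm⟩ ≤ 1 :=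
          csSup_le ⟨0, hSk0 _⟩ (hSkub ⟨0, hm⟩)
        linarith [hcle ⟨0, hm⟩]
      · intro k i
        have hfac : (∑ g ∈ Finset.univ.filter (fun g : ∀ k, G k => g k ∈ E k i), H g)
            = τ * ((∑ x ∈ E k i, q k x) * ∏ j ∈ Finset.univ.erase k, ∑ x, q j x) := by
          rw [hH]; simp only
          rw [← Finset.mul_sum, filter_sum_prod q k (E k i)]
        rw [hfac]
        have herase : (∏ j ∈ Finset.univ.erase k, ∑ x, q j x) = 1 :=
          Finset.prod_eq_one fun j _ => hqsum j
        rw [herase, mul_one]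
        have hqE : (∑ x ∈ E k i, q k x) = (∑ x ∈ E k i, h k x) / t k := by
          rw [hq]; simp only; rw [← Finset.sum_div]
        rw [hqE]
        have hEnn : 0 ≤ ∑ x ∈ E k i, h k x := Finset.sum_nonneg fun x _ => hnn k x
        calc τ * ((∑ x ∈ E k i, h k x) / t k)
            = (τ / t k) * (∑ x ∈ E k i, h k x) := by ring
          _ ≤ 1 * (∑ x ∈ E k i, h k x) := by
              refine mul_le_mul_of_nonneg_right ?_ hEnn
              rw [div_le_one (htpos k)]
              exact (hmass k).le
          _ = ∑ x ∈ E k i, h k x := one_mul _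
          _ ≤ p k i := hci k i
      · rw [hH]; simp only
        rw [← Finset.mul_sum, sum_prod_pi q]
        simp [hqsum]
    exact le_csSup hSbdd hmem
  have hAeq : sSup S = c := le_antisymm (Finset.le_inf' hne _ fun k _ => hAle k) key
  -- rewrite RHS
  have hRHS : sSup (Set.range fun k : Fin m => 1 - a k) = 1 - c := by
    have h1 : (Set.range fun k : Fin m => 1 - a k)
        = (fun k : Fin m => 1 - a k) '' (Finset.univ : Finset (Fin m)) := by
      simp
    rw [h1, ← Finset.sup'_eq_csSup_image _ hne]
    apply le_antisymm
    · exact Finset.sup'_le hne _ fun k _ => by linarith [hcle k]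
    · obtain ⟨k, hk, hk2⟩ := Finset.exists_mem_eq_inf' hne a
      have : 1 - c = 1 - a k := by rw [hc, hk2]
      rw [this]
      exact Finset.le_sup' (fun k => 1 - a k) hk
  rw [hRHS, hAeq]
end

section
/- For any λ ∈ {-1,1}^n with ∏λᵢ = -1 and any ±1-valued random variables T₁,…,Tₙ jointly distributed, Σᵢ λᵢ E[Tᵢ T_{i⊕1}] ≤ n - 2 (indices mod n). That is, every deterministic/joint hidden-variable model satisfies the cyclic Bell inequality s₁(e) ≤ n - 2. -/
open MeasureTheory

lemma aux17 (n : ℕ) (f : Fin n → ℝ) (hf : ∀ i, f i = 1 ∨ f i = -1)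
    (hp : ∏ i, f i = -1) : ∑ i, f i ≤ (n : ℝ) - 2 := by
  have hex : ∃ i, f i = -1 := by
    by_contra h
    push_neg at h
    have h1 : ∏ i, f i = 1 :=
      Finset.prod_eq_one (fun i _ => (hf i).resolve_right (h i))
    rw [h1] at hp; norm_num at hp
  obtain ⟨i, hi⟩ := hex
  have hsum : ∑ j, f j = f i + ∑ j ∈ Finset.univ.erase i, f j :=
    (Finset.add_sum_erase _ _ (Finset.mem_univ i)).symm
  have hb : ∑ j ∈ Finset.univ.erase i, f j ≤ (Finset.univ.erase i).card • (1 : ℝ) :=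
    Finset.sum_le_card_nsmul _ _ 1 (fun j _ => by rcases hf j with h | h <;> simp [h])
  have hc : (Finset.univ.erase i).card = n - 1 := by
    rw [Finset.card_erase_of_mem (Finset.mem_univ i), Finset.card_univ, Fintype.card_fin]
  have hn : 1 ≤ n := Fin.pos i
  have : ((n - 1 : ℕ) : ℝ) = (n : ℝ) - 1 := by
    push_cast [Nat.cast_sub hn]; ring
  rw [hsum, hi]
  rw [hc] at hb
  simp only [nsmul_eq_mul, mul_one] at hb
  linarith [this ▸ hb]

/-- The cyclic Bell inequality: for jointly distributed ±1 random variables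
T₁,…,Tₙ and any sign vector λ with ∏λᵢ = -1,
Σᵢ λᵢ E[Tᵢ T_{i⊕1}] ≤ n - 2 (indices mod n). -/
theorem stmt17 (n : ℕ) [NeZero n] {Ω : Type*} [MeasurableSpace Ω]
    (μ : Measure Ω) [IsProbabilityMeasure μ]
    (T : Fin n → Ω → ℝ) (hT : ∀ i ω, T i ω = 1 ∨ T i ω = -1)
    (hTm : ∀ i, Measurable (T i))
    (l : Fin n → ℝ) (hl : ∀ i, l i = 1 ∨ l i = -1) (hprod : (∏ i, l i) = -1) :
    ∑ i, l i * ∫ ω, T i ω * T (i + 1) ω ∂μ ≤ (n : ℝ) - 2 := by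
  set g : Fin n → Ω → ℝ := fun i ω => l i * (T i ω * T (i + 1) ω) with hg
  have hgval : ∀ i ω, g i ω = 1 ∨ g i ω = -1 := by
    intro i ω
    rcases hl i with h1 | h1 <;> rcases hT i ω with h2 | h2 <;>
      rcases hT (i + 1) ω with h3 | h3 <;> simp [hg, h1, h2, h3]
  have hint : ∀ i, Integrable (g i) μ := by
    intro i
    refine (integrable_const (1 : ℝ)).mono'
      ((measurable_const.mul ((hTm i).mul (hTm (i + 1)))).aestronglyMeasurable)
      (Filter.Eventually.of_forall fun ω => ?_)
    rcases hgval i ω with h | h <;> simp [h]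
  have hpt : ∀ ω, ∑ i, g i ω ≤ (n : ℝ) - 2 := by
    intro ω
    refine aux17 n (fun i => g i ω) (fun i => hgval i ω) ?_
    have hTprod : ∏ i, T (i + 1) ω = ∏ i, T i ω :=
      Fintype.prod_equiv (Equiv.addRight (1 : Fin n)) _ _ (fun i => rfl)
    have hsq : (∏ i, T i ω) * (∏ i, T i ω) = 1 := by
      rw [← Finset.prod_mul_distrib]
      exact Finset.prod_eq_one (fun i _ => by rcases hT i ω with h | h <;> simp [h])
    calc ∏ i, g i ω = (∏ i, l i) * ((∏ i, T i ω) * (∏ i, T (i + 1) ω)) := by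
          simp [hg, Finset.prod_mul_distrib]
      _ = -1 := by rw [hprod, hTprod, hsq]; ring
  calc ∑ i, l i * ∫ ω, T i ω * T (i + 1) ω ∂μ
      = ∑ i, ∫ ω, g i ω ∂μ := by
        refine Finset.sum_congr rfl fun i _ => ?_
        rw [hg]; exact (MeasureTheory.integral_const_mul _ _).symm
    _ = ∫ ω, ∑ i, g i ω ∂μ := (integral_finset_sum _ (fun i _ => hint i)).symm
    _ ≤ ∫ _, ((n : ℝ) - 2) ∂μ :=
        integral_mono (integrable_finset_sum _ (fun i _ => hint i)) (integrable_const _) hpt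
    _ = (n : ℝ) - 2 := by simp
end

section
/- Conversely to the cyclic Bell inequality: any vector e ∈ [-1,1]^n with s₁(e) ≤ n - 2 can be written as a convex combination of vectors of the form (ε₁ε₂, ε₂ε₃, …, εₙε₁) with ε ∈ {-1,1}^n; i.e., the demicube (convex hull of even vertices of the n-cube) is exactly the set of correlation vectors of jointly distributed ±1 cyclic products. -/
/-- A product of signs is a sign. -/
lemma sign_prod {α : Type*} (s : Finset α) (v : α → ℝ) (h : ∀ i ∈ s, v i = 1 ∨ v i = -1) :
    (∏ i ∈ s, v i) = 1 ∨ (∏ i ∈ s, v i) = -1 := by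
  refine Finset.prod_induction v (fun x => x = 1 ∨ x = -1) ?_ (Or.inl rfl) h
  rintro a b (rfl | rfl) (rfl | rfl) <;> norm_num

/-- Every sign vector with product 1 is a cyclic-product vector. -/
lemma vertex_mem (n : ℕ) [NeZero n] (v : Fin n → ℝ) (hv : ∀ i, v i = 1 ∨ v i = -1)
    (hp : (∏ i, v i) = 1) :
    v ∈ {w : Fin n → ℝ | ∃ ε : Fin n → ℝ,
      (∀ i, ε i = 1 ∨ ε i = -1) ∧ w = fun i => ε i * ε (i + 1)} := by
  obtain ⟨m, rfl⟩ : ∃ m, n = m + 1 := ⟨n - 1, (Nat.succ_pred_eq_of_pos (NeZero.pos n)).symm⟩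
  set ε : Fin (m+1) → ℝ :=
    fun i => ∏ k ∈ Finset.univ.filter (fun k : Fin (m+1) => (k : ℕ) < (i : ℕ)), v k with hε
  have hεapp : ∀ i : Fin (m+1),
      ε i = ∏ k ∈ Finset.univ.filter (fun k : Fin (m+1) => (k : ℕ) < (i : ℕ)), v k :=
    fun i => rfl
  have hεsign : ∀ i, ε i = 1 ∨ ε i = -1 := fun i => by
    rw [hεapp]; exact sign_prod _ _ (fun k _ => hv k)
  refine ⟨ε, hεsign, ?_⟩
  funext i
  have hsq : ∀ i : Fin (m+1), v i * v i = 1 := by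
    intro i; rcases hv i with h | h <;> rw [h] <;> norm_num
  rcases eq_or_ne i (Fin.last m) with rfl | hne
  · -- last index: wraps to 0
    have h0 : (Fin.last m + 1 : Fin (m+1)) = 0 := by
      simp [Fin.ext_iff, Fin.add_def]
    rw [h0]
    have h1 : Finset.univ.filter (fun k : Fin (m+1) => (k : ℕ) < ((0 : Fin (m+1)) : ℕ)) = ∅ := by
      ext k; simp
    have h2 : Finset.univ.filter (fun k : Fin (m+1) => (k : ℕ) < ((Fin.last m : Fin (m+1)) : ℕ))
        = Finset.univ.erase (Fin.last m) := by
      ext k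
      simp only [Finset.mem_filter, Finset.mem_univ, true_and, Finset.mem_erase, Fin.val_last]
      constructor
      · intro h
        refine ⟨fun he => ?_, trivial⟩
        rw [he, Fin.val_last] at h; omega
      · rintro ⟨h, -⟩
        have hk := k.isLt
        have : (k : ℕ) ≠ m := fun hh => h (Fin.ext (by simp [hh]))
        omega
    have hεlast : ε (Fin.last m) = ∏ k ∈ Finset.univ.erase (Fin.last m), v k := by
      rw [hεapp, h2]
    have hε0 : ε 0 = 1 := by rw [hεapp, h1]; exact Finset.prod_empty
    have hmul : v (Fin.last m) * ∏ k ∈ Finset.univ.erase (Fin.last m), v k = 1 := by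
      rw [Finset.mul_prod_erase Finset.univ v (Finset.mem_univ (Fin.last m))]; exact hp
    have h3 : ε (Fin.last m) = v (Fin.last m) := by
      rw [hεlast]
      rcases hv (Fin.last m) with h | h <;> rw [h] at hmul ⊢ <;> linarith
    show v (Fin.last m) = ε (Fin.last m) * ε 0
    rw [hε0, h3, mul_one]
  · -- non-last index
    have hlt : (i : ℕ) + 1 < m + 1 := by
      have h5 := i.isLt
      have : (i : ℕ) ≠ m := fun h => hne (Fin.ext (by simp [h]))
      omega
    have hval : ((i + 1 : Fin (m+1)) : ℕ) = (i : ℕ) + 1 := by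
      simp [Fin.add_def, Nat.mod_eq_of_lt hlt]
    have hins : Finset.univ.filter (fun k : Fin (m+1) => (k : ℕ) < ((i + 1 : Fin (m+1)) : ℕ))
        = insert i (Finset.univ.filter (fun k : Fin (m+1) => (k : ℕ) < (i : ℕ))) := by
      ext k
      simp only [Finset.mem_filter, Finset.mem_univ, true_and, Finset.mem_insert, hval]
      constructor
      · intro h
        rcases Nat.lt_succ_iff_lt_or_eq.mp h with h | h
        · exact Or.inr h
        · exact Or.inl (Fin.ext h)
      · rintro (rfl | h) <;> omega
    have hstep : ε (i + 1) = v i * ε i := by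
      rw [hεapp, hεapp, hins, Finset.prod_insert (by simp)]
    show v i = ε i * ε (i + 1)
    rw [hstep]
    rcases hεsign i with h | h <;> rw [h] <;> ring

/-- Each odd-sign sum is at most s1. -/
lemma le_s1 (n : ℕ) (x : Fin n → ℝ) (l : Fin n → ℝ) (hl : ∀ i, l i = 1 ∨ l i = -1)
    (hp : (∏ i, l i) = -1) : (∑ i, l i * x i) ≤ s1 n x := by
  apply le_csSup
  · refine ⟨∑ i, |x i|, ?_⟩
    rintro s ⟨l', hl', -, rfl⟩
    calc ∑ i, l' i * x i ≤ ∑ i, |l' i * x i| :=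
          Finset.sum_le_sum fun i _ => le_abs_self _
      _ = ∑ i, |x i| := by
          refine Finset.sum_congr rfl fun i _ => ?_
          rw [abs_mul]
          rcases hl' i with h | h <;> simp [h]
  · exact ⟨l, hl, hp, rfl⟩

/-- Converse of the cyclic Bell inequality: any e ∈ [-1,1]ⁿ with s₁(e) ≤ n-2
is a convex combination of cyclic-product vectors (ε₁ε₂, …, εₙε₁), ε ∈ {-1,1}ⁿ. -/
theorem stmt18 (n : ℕ) [NeZero n] (e : Fin n → ℝ) (he : ∀ i, |e i| ≤ 1)
    (hs : s1 n e ≤ (n : ℝ) - 2) :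
    e ∈ convexHull ℝ {v : Fin n → ℝ | ∃ ε : Fin n → ℝ,
      (∀ i, ε i = 1 ∨ ε i = -1) ∧ v = fun i => ε i * ε (i + 1)} := by
  set S : Set (Fin n → ℝ) := {v : Fin n → ℝ | ∃ ε : Fin n → ℝ,
      (∀ i, ε i = 1 ∨ ε i = -1) ∧ v = fun i => ε i * ε (i + 1)} with hS
  -- S is finite
  have hSfin : S.Finite := by
    have hsub : S ⊆ Set.pi Set.univ (fun _ : Fin n => ({1, -1} : Set ℝ)) := by
      rintro v ⟨ε, hε, rfl⟩ i -
      rcases hε i with h | h <;> rcases hε (i+1) with h' | h' <;>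
        simp [h, h', Set.mem_insert_iff]
    exact Set.Finite.subset (Set.Finite.pi fun _ => Set.toFinite _) hsub
  by_contra hmem
  obtain ⟨f, u, hfu, hux⟩ := geometric_hahn_banach_closed_point
    (convex_convexHull ℝ S) (hSfin.isClosed_convexHull (𝕜 := ℝ)) hmem
  -- coordinates of f
  set c : Fin n → ℝ := fun i => f (fun j => if i = j then 1 else 0) with hc
  have hflin : ∀ y : Fin n → ℝ, f y = ∑ i, y i * c i := by
    intro y
    conv_lhs => rw [pi_eq_sum_univ y]
    rw [map_sum]
    refine Finset.sum_congr rfl fun i _ => ?_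
    rw [map_smul]; rfl
  -- sign vector of c
  set l : Fin n → ℝ := fun i => if 0 ≤ c i then 1 else -1 with hl
  have hlsign : ∀ i, l i = 1 ∨ l i = -1 := by
    intro i; by_cases h : 0 ≤ c i <;> simp [hl, h]
  have hlc : ∀ i, l i * c i = |c i| := by
    intro i
    by_cases h : 0 ≤ c i
    · simp [hl, h, abs_of_nonneg h]
    · simp [hl, h, abs_of_neg (lt_of_not_ge h)]
  have hle1 : ∀ i, l i * e i ≤ 1 := by
    intro i
    calc l i * e i ≤ |l i * e i| := le_abs_self _
      _ = |e i| := by rw [abs_mul]; rcases hlsign i with h | h <;> simp [h]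
      _ ≤ 1 := he i
  -- key: f of a vertex v is ∑ v i * c i
  have hvlt : ∀ v ∈ S, (∑ i, v i * c i) < u := fun v hv => by
    rw [← hflin]; exact hfu v (subset_convexHull ℝ S hv)
  have hxgt : u < ∑ i, e i * c i := by rw [← hflin]; exact hux
  rcases sign_prod Finset.univ l (fun i _ => hlsign i) with hprod | hprod
  · -- even sign vector: l itself is a vertex, f l = ∑|c i| ≥ f e, contradiction
    have hv := hvlt l (vertex_mem n l hlsign hprod)
    have : (∑ i, e i * c i) ≤ ∑ i, l i * c i := by
      refine Finset.sum_le_sum fun i _ => ?_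
      rw [hlc i]
      calc e i * c i ≤ |e i * c i| := le_abs_self _
        _ = |e i| * |c i| := abs_mul _ _
        _ ≤ 1 * |c i| := mul_le_mul_of_nonneg_right (he i) (abs_nonneg _)
        _ = |c i| := one_mul _
    linarith
  · -- odd sign vector: flip at the min |c|
    obtain ⟨j, -, hj⟩ := Finset.exists_min_image Finset.univ (fun i => |c i|)
      ⟨⟨0, NeZero.pos n⟩, Finset.mem_univ _⟩
    set μ : Fin n → ℝ := Function.update l j (-l j) with hμ
    have hμsign : ∀ i, μ i = 1 ∨ μ i = -1 := by
      intro i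
      rcases eq_or_ne i j with rfl | h
      · rcases hlsign i with h | h <;> simp [hμ, h]
      · simp only [hμ, Function.update_of_ne h]; exact hlsign i
    have hprodsplit : l j * (∏ i ∈ Finset.univ.erase j, l i) = -1 := by
      rw [Finset.mul_prod_erase Finset.univ l (Finset.mem_univ j)]; exact hprod
    have hμprod : (∏ i, μ i) = 1 := by
      rw [← Finset.mul_prod_erase Finset.univ μ (Finset.mem_univ j)]
      have herase : (∏ i ∈ Finset.univ.erase j, μ i) = ∏ i ∈ Finset.univ.erase j, l i :=
        Finset.prod_congr rfl fun i hi => by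
          rw [hμ, Function.update_of_ne (Finset.ne_of_mem_erase hi)]
      have hμj : μ j = -l j := by rw [hμ, Function.update_self]
      rw [herase, hμj]
      rcases hlsign j with h | h <;> rw [h] at hprodsplit ⊢ <;> nlinarith [hprodsplit]
    have hv := hvlt μ (vertex_mem n μ hμsign hμprod)
    -- f μ = ∑ |c i| - 2|c j|
    have hesum : (∑ i ∈ Finset.univ.erase j, l i * c i) = (∑ i, |c i|) - |c j| := by
      have h2 : (∑ i, l i * c i) = ∑ i, |c i| := Finset.sum_congr rfl fun i _ => hlc i
      have h3 : l j * c j + (∑ i ∈ Finset.univ.erase j, l i * c i) = ∑ i, l i * c i :=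
        Finset.add_sum_erase Finset.univ (fun i => l i * c i) (Finset.mem_univ j)
      rw [h2, hlc j] at h3
      linarith
    have hfμ : (∑ i, μ i * c i) = (∑ i, |c i|) - 2 * |c j| := by
      have h4 : μ j * c j + (∑ i ∈ Finset.univ.erase j, μ i * c i) = ∑ i, μ i * c i :=
        Finset.add_sum_erase Finset.univ (fun i => μ i * c i) (Finset.mem_univ j)
      have herase : (∑ i ∈ Finset.univ.erase j, μ i * c i)
          = ∑ i ∈ Finset.univ.erase j, l i * c i :=
        Finset.sum_congr rfl fun i hi => by
          rw [hμ, Function.update_of_ne (Finset.ne_of_mem_erase hi)]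
      have hμj : μ j * c j = -|c j| := by
        rw [hμ, Function.update_self, ← hlc j]; ring
      rw [herase, hμj, hesum] at h4
      linarith
    -- f e ≤ ∑ |c i| - 2 |c j|
    have hsum : (∑ i, l i * e i) ≤ (n : ℝ) - 2 := le_trans (le_s1 n e l hlsign hprod) hs
    have hfe : (∑ i, e i * c i) ≤ (∑ i, |c i|) - 2 * |c j| := by
      have key : (∑ i, e i * c i)
          = (∑ i, (|c i| - |c j|) * (l i * e i)) + |c j| * (∑ i, l i * e i) := by
        rw [Finset.mul_sum, ← Finset.sum_add_distrib]
        refine Finset.sum_congr rfl fun i _ => ?_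
        have hsq : l i * l i = 1 := by rcases hlsign i with h | h <;> rw [h] <;> norm_num
        have : e i * c i = |c i| * (l i * e i) := by
          rw [← hlc i]
          calc e i * c i = (l i * l i) * (e i * c i) := by rw [hsq]; ring
            _ = l i * c i * (l i * e i) := by ring
        rw [this]; ring
      rw [key]
      have h1 : (∑ i, (|c i| - |c j|) * (l i * e i)) ≤ ∑ i, (|c i| - |c j|) := by
        refine Finset.sum_le_sum fun i _ => ?_
        have hnn : 0 ≤ |c i| - |c j| := by linarith [hj i (Finset.mem_univ i)]
        calc (|c i| - |c j|) * (l i * e i) ≤ (|c i| - |c j|) * 1 :=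
              mul_le_mul_of_nonneg_left (hle1 i) hnn
          _ = |c i| - |c j| := mul_one _
      have h2 : |c j| * (∑ i, l i * e i) ≤ |c j| * ((n : ℝ) - 2) :=
        mul_le_mul_of_nonneg_left hsum (abs_nonneg _)
      have h3 : (∑ i, (|c i| - |c j|)) = (∑ i, |c i|) - n * |c j| := by
        rw [Finset.sum_sub_distrib, Finset.sum_const, Finset.card_univ, Fintype.card_fin]
        ring
      rw [h3] at h1
      nlinarith [abs_nonneg (c j)]
    linarith [hfμ ▸ hv]
end
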